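/- arXiv:quant-ph/0212147 — 5 statements merged into one kernel-verified Lean document; each statement's English description precedes it below -/
import Mathlib

section
/- Let ν₁ and ν₂ be Radon measures on Ĝ/H⊥ finite on compact sets, and let ν̃₁, ν̃₂ be the corresponding tilde measures on Ĝ. If ν₁ is absolutely continuous with respect to ν₂ then ν̃₁ is absolutely continuous with respect to ν̃₂; if ν₁ and ν₂ are mutually singular then ν̃₁ and ν̃₂ are mutually singular. In particular, the correspondence ν ↦ ν̃ preserves equivalence (mutual absolute continuity) and orthogonality of measures. -/
open MeasureTheory Complex Topology Pointwise Filter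
open scoped ENNReal NNReal
set_option linter.unusedSectionVars false
set_option maxHeartbeats 1000000

section Aux

variable {X : Type} [CommGroup X] [TopologicalSpace X] [IsTopologicalGroup X]
  [LocallyCompactSpace X] [SecondCountableTopology X] [T2Space X]
  [MeasurableSpace X] [BorelSpace X]
  {Hp : Subgroup X}
  [MeasurableSpace ↥Hp] [BorelSpace ↥Hp]
  [MeasurableSpace (X ⧸ Hp)] [BorelSpace (X ⧸ Hp)]

lemma fiber_compact (hHpc : IsClosed (Hp : Set X)) (x : X) {C : Set X} (hC : IsCompact C) :
    IsCompact {y : ↥Hp | x * ↑y ∈ C} := by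
  have h1 : IsCompact ((fun z : X => x * z) ⁻¹' C) :=
    (Homeomorph.mulLeft x).isCompact_preimage.2 hC
  exact hHpc.isClosedEmbedding_subtypeVal.isCompact_preimage h1

lemma fiber_closed (x : X) {C : Set X} (hC : IsClosed C) :
    IsClosed {y : ↥Hp | x * ↑y ∈ C} := by
  have : Continuous fun y : ↥Hp => x * ↑y := by continuity
  exact hC.preimage this

lemma fiber_bound (μHp : Measure ↥Hp) [μHp.IsHaarMeasure] {C : Set X} (x : X) :
    μHp {y : ↥Hp | x * ↑y ∈ C} ≤ μHp (Subtype.val ⁻¹' (C⁻¹ * C)) := by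
  rcases Set.eq_empty_or_nonempty {y : ↥Hp | x * ↑y ∈ C} with h | ⟨y₀, hy₀⟩
  · simp [h]
  · have hsub : {y : ↥Hp | x * ↑y ∈ C} ⊆ (fun y => y₀ * y) '' (Subtype.val ⁻¹' (C⁻¹ * C)) := by
      intro y hy
      refine ⟨y₀⁻¹ * y, ?_, by group⟩
      have hrw : (↑y₀ : X)⁻¹ * ↑y = (x * ↑y₀)⁻¹ * (x * ↑y) := by group
      simp only [Set.mem_preimage, Subgroup.coe_mul, Subgroup.coe_inv, hrw]
      exact Set.mul_mem_mul (Set.inv_mem_inv.2 hy₀) hy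
    calc μHp {y : ↥Hp | x * ↑y ∈ C} ≤ μHp ((fun y => y₀ * y) '' (Subtype.val ⁻¹' (C⁻¹ * C))) :=
          measure_mono hsub
      _ = μHp (Subtype.val ⁻¹' (C⁻¹ * C)) := by
          rw [Set.image_mul_left]; exact measure_preimage_mul μHp y₀⁻¹ _

lemma mk_out_mul (xq : X ⧸ Hp) (y : ↥Hp) :
    (QuotientGroup.mk (Quotient.out xq * ↑y) : X ⧸ Hp) = xq := by
  have h1 : (QuotientGroup.mk (↑y : X) : X ⧸ Hp) = 1 := (QuotientGroup.eq_one_iff _).2 y.2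
  rw [QuotientGroup.mk_mul, h1, mul_one, QuotientGroup.out_eq']

lemma avg_comp_mk (μHp : Measure ↥Hp) [μHp.IsHaarMeasure] (φ : X → ℝ) (x : X) :
    ∫ y : ↥Hp, φ (Quotient.out (QuotientGroup.mk x : X ⧸ Hp) * ↑y) ∂μHp
      = ∫ y : ↥Hp, φ (x * ↑y) ∂μHp := by
  set q : X ⧸ Hp := QuotientGroup.mk x
  have hmem : x⁻¹ * Quotient.out q ∈ Hp := by
    rw [← QuotientGroup.eq]
    exact (QuotientGroup.out_eq' q).symm
  set h : ↥Hp := ⟨x⁻¹ * Quotient.out q, hmem⟩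
  have key := integral_mul_left_eq_self (μ := μHp) (fun y : ↥Hp => φ (x * ↑y)) h
  have : ∀ y : ↥Hp, x * ↑(h * y) = Quotient.out q * ↑y := by
    intro y; simp only [Subgroup.coe_mul, h, Subgroup.coe_mk]; group
  simp only [this] at key
  exact key

lemma cont_avg (hHpc : IsClosed (Hp : Set X)) (μHp : Measure ↥Hp) [μHp.IsHaarMeasure]
    {φ : X → ℝ} (hφ : Continuous φ) (hφc : HasCompactSupport φ) (hφ1 : ∀ x, ‖φ x‖ ≤ 1) :
    Continuous fun xq : X ⧸ Hp => ∫ y : ↥Hp, φ (Quotient.out xq * ↑y) ∂μHp := by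
  have hX : Continuous fun x : X => ∫ y : ↥Hp, φ (x * ↑y) ∂μHp := by
    rw [continuous_iff_continuousAt]
    intro x₀
    obtain ⟨W, hWc, hWn⟩ := exists_compact_mem_nhds x₀
    set C := tsupport φ with hC
    have hCc : IsCompact C := hφc
    set S : Set ↥Hp := Subtype.val ⁻¹' (W⁻¹ * C) with hS
    have hSc : IsCompact S :=
      hHpc.isClosedEmbedding_subtypeVal.isCompact_preimage (hWc.inv.mul hCc)
    apply continuousAt_of_dominated (bound := S.indicator fun _ => (1 : ℝ))
    · exact Eventually.of_forall fun x =>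
        (hφ.comp (by continuity : Continuous fun y : ↥Hp => x * ↑y)).aestronglyMeasurable
    · refine eventually_iff_exists_mem.2 ⟨W, hWn, fun x hx => ae_of_all _ fun y => ?_⟩
      by_cases hy : y ∈ S
      · rw [Set.indicator_of_mem hy]; exact hφ1 _
      · rw [Set.indicator_of_notMem hy]
        have : φ (x * ↑y) = 0 := by
          by_contra h0
          apply hy
          have hmem : x * ↑y ∈ C := subset_tsupport φ h0
          have heq : (↑y : X) = x⁻¹ * (x * ↑y) := by group
          rw [hS, Set.mem_preimage, heq]
          exact Set.mul_mem_mul (Set.inv_mem_inv.2 hx) hmem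
        simp [this]
    · rw [integrable_indicator_iff hSc.isClosed.measurableSet]
      exact integrableOn_const hSc.measure_lt_top.ne
    · exact ae_of_all _ fun y => (hφ.comp (continuous_mul_right (↑y : X))).continuousAt
  refine (QuotientGroup.isQuotientMap_mk Hp).continuous_iff.2 ?_
  have heq : (fun xq : X ⧸ Hp => ∫ y : ↥Hp, φ (Quotient.out xq * ↑y) ∂μHp) ∘ QuotientGroup.mk
      = fun x : X => ∫ y : ↥Hp, φ (x * ↑y) ∂μHp := funext fun x => avg_comp_mk μHp φ x
  rw [heq]
  exact hX

theorem tilde_formula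
    (hHpc : IsClosed (Hp : Set X))
    (μHp : Measure ↥Hp) [μHp.IsHaarMeasure]
    (ν : Measure (X ⧸ Hp)) [ν.Regular] (νt : Measure X) [νt.Regular]
    (hνt : ∀ φ : X → ℂ, Continuous φ → HasCompactSupport φ →
      ∫ x, φ x ∂νt = ∫ xq : X ⧸ Hp, (∫ y : ↥Hp, φ (Quotient.out xq * ↑y) ∂μHp) ∂ν)
    {K : Set X} (hK : IsCompact K) :
    Measurable (fun xq : X ⧸ Hp => (μHp {y : ↥Hp | Quotient.out xq * ↑y ∈ K}).toReal) ∧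
      Integrable (fun xq : X ⧸ Hp => (μHp {y : ↥Hp | Quotient.out xq * ↑y ∈ K}).toReal) ν ∧
      νt K = ENNReal.ofReal
        (∫ xq, (μHp {y : ↥Hp | Quotient.out xq * ↑y ∈ K}).toReal ∂ν) := by
  haveI : IsClosed (Hp : Set X) := hHpc
  set fK : (X ⧸ Hp) → ℝ :=
    fun xq => (μHp {y : ↥Hp | Quotient.out xq * ↑y ∈ K}).toReal with hfKdef
  -- real-valued identity
  have hreal : ∀ φ : X → ℝ, Continuous φ → HasCompactSupport φ →
      ∫ x, φ x ∂νt = ∫ xq : X ⧸ Hp, (∫ y : ↥Hp, φ (Quotient.out xq * ↑y) ∂μHp) ∂ν := by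
    intro φ hφ hφc
    have h := hνt (fun x => (φ x : ℂ)) (Complex.continuous_ofReal.comp hφ)
      (hφc.comp_left (g := fun r : ℝ => (r : ℂ)) Complex.ofReal_zero)
    simp only [show ∀ r : ℝ, (r : ℂ) = RCLike.ofReal r from fun r => rfl] at h
    simp only [integral_ofReal] at h
    exact_mod_cast h
  obtain ⟨L, hLc, hKL⟩ := exists_compact_superset hK
  have hKLsub : K ⊆ L := hKL.trans interior_subset
  letI : MetricSpace X := TopologicalSpace.metrizableSpaceMetric X
  set U : ℕ → Set X := fun n => Metric.thickening (1/(n+1)) K ∩ interior L with hUdef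
  have hUo : ∀ n, IsOpen (U n) := fun n => Metric.isOpen_thickening.inter isOpen_interior
  have hKU : ∀ n, K ⊆ U n := fun n =>
    Set.subset_inter (Metric.self_subset_thickening (by positivity) K) hKL
  have hUL : ∀ n, U n ⊆ L := fun n => Set.inter_subset_right.trans interior_subset
  have hUmono : ∀ m n, m ≤ n → U n ⊆ U m := by
    intro m n h
    apply Set.inter_subset_inter_left
    apply Metric.thickening_mono
    apply one_div_le_one_div_of_le
    · positivity
    · exact_mod_cast by omega
  have hUK : ∀ x, (∀ n, x ∈ U n) → x ∈ K := by
    intro x hx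
    rw [← hK.isClosed.closure_eq, Metric.mem_closure_iff]
    intro ε hε
    obtain ⟨n, hn⟩ := exists_nat_one_div_lt hε
    obtain ⟨z, hz, hdist⟩ := Metric.mem_thickening_iff.1 (hx n).1
    exact ⟨z, hz, hdist.trans hn⟩
  have hex : ∀ n, ∃ f : C(X, ℝ), Set.EqOn f 1 K ∧ Set.EqOn f 0 (U n)ᶜ ∧ HasCompactSupport f ∧
      ∀ x, f x ∈ Set.Icc (0:ℝ) 1 := fun n =>
    exists_continuous_one_zero_of_isCompact hK (hUo n).isClosed_compl
      (Set.disjoint_left.2 fun x hxK hxc => hxc (hKU n hxK))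
  choose φf hone hzero hφc hicc using hex
  have hnorm1 : ∀ n x, ‖φf n x‖ ≤ 1 := fun n x => by
    rcases hicc n x with ⟨h0, h1⟩
    rw [Real.norm_eq_abs, abs_le]; exact ⟨by linarith, h1⟩
  have hzero' : ∀ n x, x ∉ U n → φf n x = 0 := fun n x hx => hzero n hx
  have hone' : ∀ n x, x ∈ K → φf n x = 1 := fun n x hx => hone n hx
  -- pointwise convergence on X
  have hptX : ∀ x : X,
      Tendsto (fun n => φf n x) atTop (𝓝 (K.indicator (fun _ => (1:ℝ)) x)) := by
    intro x
    by_cases hx : x ∈ K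
    · rw [Set.indicator_of_mem hx]
      have heq : (fun n => φf n x) = fun _ => (1:ℝ) := funext fun n => hone' n x hx
      rw [heq]; exact tendsto_const_nhds
    · rw [Set.indicator_of_notMem hx]
      have hex0 : ∃ n₀, x ∉ U n₀ := by
        by_contra hcon
        push_neg at hcon
        exact hx (hUK x hcon)
      obtain ⟨n₀, hn₀⟩ := hex0
      refine tendsto_atTop_of_eventually_const (i₀ := n₀) fun n hn => ?_
      exact hzero' n x fun hmem => hn₀ (hUmono n₀ n hn hmem)
  -- uniform bound on the fiber integrals
  set MC : ℝ := (μHp (Subtype.val ⁻¹' (L⁻¹ * L))).toReal with hMCdef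
  have hLLc : IsCompact (Subtype.val ⁻¹' (L⁻¹ * L) : Set ↥Hp) :=
    hHpc.isClosedEmbedding_subtypeVal.isCompact_preimage (hLc.inv.mul hLc)
  have hLLfin : μHp (Subtype.val ⁻¹' (L⁻¹ * L)) ≠ ⊤ := hLLc.measure_lt_top.ne
  -- inner convergence
  set F : ℕ → (X ⧸ Hp) → ℝ :=
    fun n xq => ∫ y : ↥Hp, φf n (Quotient.out xq * ↑y) ∂μHp with hFdef
  have hinner : ∀ xq : X ⧸ Hp, Tendsto (fun n => F n xq) atTop (𝓝 (fK xq)) := by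
    intro xq
    set x := Quotient.out xq with hxdef
    have hSLm : MeasurableSet {y : ↥Hp | x * ↑y ∈ L} :=
      (fiber_closed x hLc.isClosed).measurableSet
    have hSLc : IsCompact {y : ↥Hp | x * ↑y ∈ L} := fiber_compact hHpc x hLc
    have hSKm : MeasurableSet {y : ↥Hp | x * ↑y ∈ K} :=
      (fiber_closed x hK.isClosed).measurableSet
    have key := tendsto_integral_of_dominated_convergence
      (F := fun n (y : ↥Hp) => φf n (x * ↑y))
      (f := fun y : ↥Hp => ({y : ↥Hp | x * ↑y ∈ K}).indicator (fun _ => (1:ℝ)) y)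
      (μ := μHp)
      (({y : ↥Hp | x * ↑y ∈ L}).indicator fun _ => (1:ℝ))
      (fun n => ((φf n).continuous.comp
        (by continuity : Continuous fun y : ↥Hp => x * ↑y)).aestronglyMeasurable)
      ((integrable_indicator_iff hSLm).2 (integrableOn_const hSLc.measure_lt_top.ne))
      (fun n => ae_of_all _ fun y => by
        show ‖(φf n) (x * ↑y)‖ ≤ ({y : ↥Hp | x * ↑y ∈ L}).indicator (fun _ => (1:ℝ)) y
        by_cases hy : x * ↑y ∈ L
        · rw [Set.indicator_of_mem (by exact hy)]
          exact hnorm1 n _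
        · rw [Set.indicator_of_notMem (by exact hy)]
          rw [hzero' n _ fun hmem => hy (hUL n hmem)]
          simp)
      (ae_of_all _ fun y => by
        have hval : ({y : ↥Hp | x * ↑y ∈ K}).indicator (fun _ => (1:ℝ)) y
            = K.indicator (fun _ => (1:ℝ)) (x * ↑y) := by
          by_cases h : x * ↑y ∈ K
          · rw [Set.indicator_of_mem (by exact h), Set.indicator_of_mem h]
          · rw [Set.indicator_of_notMem (by exact h), Set.indicator_of_notMem h]
        show Tendsto (fun n => (φf n) (x * ↑y)) atTop
          (𝓝 (({y : ↥Hp | x * ↑y ∈ K}).indicator (fun _ => (1:ℝ)) y))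
        rw [hval]
        exact hptX (x * ↑y))
    have hval2 : (∫ y : ↥Hp, ({y : ↥Hp | x * ↑y ∈ K}).indicator (fun _ => (1:ℝ)) y ∂μHp)
        = fK xq := by
      have : (∫ y : ↥Hp, ({y : ↥Hp | x * ↑y ∈ K}).indicator (fun _ => (1:ℝ)) y ∂μHp)
          = (μHp {y : ↥Hp | x * ↑y ∈ K}).toReal := integral_indicator_one hSKm
      rw [this, hfKdef]
    rw [hval2] at key
    exact key
  -- continuity/measurability of the F n
  have hFcont : ∀ n, Continuous (F n) :=
    fun n => cont_avg hHpc μHp (φf n).continuous (hφc n) (hnorm1 n)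
  have hfKmeas : Measurable fK :=
    measurable_of_tendsto_metrizable (fun n => (hFcont n).measurable)
      (tendsto_pi_nhds.2 hinner)
  -- bound on F n
  have hπLc : IsCompact (QuotientGroup.mk '' L : Set (X ⧸ Hp)) :=
    hLc.image QuotientGroup.continuous_mk
  have hπLm : MeasurableSet (QuotientGroup.mk '' L : Set (X ⧸ Hp)) :=
    hπLc.isClosed.measurableSet
  set bound : (X ⧸ Hp) → ℝ := (QuotientGroup.mk '' L).indicator fun _ => MC with hbounddef
  have hMC0 : 0 ≤ MC := ENNReal.toReal_nonneg
  have hFle : ∀ n xq, ‖F n xq‖ ≤ bound xq := by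
    intro n xq
    set x := Quotient.out xq with hxdef
    by_cases hxq : xq ∈ (QuotientGroup.mk '' L : Set (X ⧸ Hp))
    · rw [hbounddef, Set.indicator_of_mem hxq]
      have hSLm : MeasurableSet {y : ↥Hp | x * ↑y ∈ L} :=
        (fiber_closed x hLc.isClosed).measurableSet
      have hSLc : IsCompact {y : ↥Hp | x * ↑y ∈ L} := fiber_compact hHpc x hLc
      have h1 : ‖F n xq‖ ≤ ∫ y : ↥Hp, ({y : ↥Hp | x * ↑y ∈ L}).indicator (fun _ => (1:ℝ)) y ∂μHp := by
        apply norm_integral_le_of_norm_le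
          ((integrable_indicator_iff hSLm).2 (integrableOn_const hSLc.measure_lt_top.ne))
        refine ae_of_all _ fun y => ?_
        by_cases hy : x * ↑y ∈ L
        · rw [Set.indicator_of_mem (by exact hy)]; exact hnorm1 n _
        · rw [Set.indicator_of_notMem (by exact hy)]
          rw [hzero' n _ fun hmem => hy (hUL n hmem)]
          simp
      have h2 : (∫ y : ↥Hp, ({y : ↥Hp | x * ↑y ∈ L}).indicator (fun _ => (1:ℝ)) y ∂μHp)
          = (μHp {y : ↥Hp | x * ↑y ∈ L}).toReal := integral_indicator_one hSLm
      have h3 : (μHp {y : ↥Hp | x * ↑y ∈ L}).toReal ≤ MC :=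
        ENNReal.toReal_mono hLLfin (fiber_bound μHp x)
      calc ‖F n xq‖ ≤ _ := h1
        _ = _ := h2
        _ ≤ MC := h3
    · rw [hbounddef, Set.indicator_of_notMem hxq]
      have hzero2 : ∀ y : ↥Hp, φf n (x * ↑y) = 0 := by
        intro y
        by_contra h0
        apply hxq
        have hmem : x * ↑y ∈ U n := by
          by_contra hmem
          exact h0 (hzero' n _ hmem)
        exact ⟨x * ↑y, hUL n hmem, mk_out_mul xq y⟩
      have : F n xq = 0 := by
        rw [hFdef]
        simp only [hzero2]
        exact integral_eq_zero_of_ae (ae_of_all _ fun y => hzero2 y)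
      rw [this]; simp
  have hboundint : Integrable bound ν := by
    rw [hbounddef, integrable_indicator_iff hπLm]
    exact integrableOn_const hπLc.measure_lt_top.ne
  -- outer convergence
  have houter : Tendsto (fun n => ∫ xq, F n xq ∂ν) atTop (𝓝 (∫ xq, fK xq ∂ν)) := by
    refine tendsto_integral_of_dominated_convergence bound
      (fun n => (hFcont n).aestronglyMeasurable) hboundint
      (fun n => ae_of_all _ (hFle n)) (ae_of_all _ hinner)
  -- integrability of fK
  have hfKle : ∀ xq, ‖fK xq‖ ≤ bound xq := by
    intro xq
    have h0 : 0 ≤ fK xq := ENNReal.toReal_nonneg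
    rw [Real.norm_of_nonneg h0]
    by_cases hxq : xq ∈ (QuotientGroup.mk '' L : Set (X ⧸ Hp))
    · rw [hbounddef, Set.indicator_of_mem hxq]
      refine ENNReal.toReal_mono hLLfin ?_
      refine (fiber_bound μHp _).trans (measure_mono ?_)
      have : (K⁻¹ * K : Set X) ⊆ L⁻¹ * L := Set.mul_subset_mul (Set.inv_subset_inv.2 hKLsub) hKLsub
      exact Set.preimage_mono this
    · rw [hbounddef, Set.indicator_of_notMem hxq]
      have : {y : ↥Hp | Quotient.out xq * ↑y ∈ K} = ∅ := by
        rw [Set.eq_empty_iff_forall_notMem]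
        intro y hy
        exact hxq ⟨Quotient.out xq * ↑y, hKLsub hy, mk_out_mul xq y⟩
      rw [hfKdef]
      simp [this]
  have hfKint : Integrable fK ν :=
    Integrable.mono' hboundint hfKmeas.aestronglyMeasurable (ae_of_all _ hfKle)
  -- νt side convergence
  have hνtL : νt L ≠ ⊤ := hLc.measure_lt_top.ne
  have hνtconv : Tendsto (fun n => ∫ x, φf n x ∂νt) atTop (𝓝 ((νt K).toReal)) := by
    have key := tendsto_integral_of_dominated_convergence
      (F := fun n (x : X) => φf n x)
      (f := fun x => K.indicator (fun _ => (1:ℝ)) x) (μ := νt)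
      (L.indicator fun _ => (1:ℝ))
      (fun n => (φf n).continuous.aestronglyMeasurable)
      ((integrable_indicator_iff hLc.isClosed.measurableSet).2
        (integrableOn_const hLc.measure_lt_top.ne))
      (fun n => ae_of_all _ fun x => by
        show ‖(φf n) x‖ ≤ L.indicator (fun _ => (1:ℝ)) x
        by_cases hx : x ∈ L
        · rw [Set.indicator_of_mem hx]; exact hnorm1 n x
        · rw [Set.indicator_of_notMem hx, hzero' n x fun hmem => hx (hUL n hmem)]; simp)
      (ae_of_all _ hptX)
    have : (∫ x, K.indicator (fun _ => (1:ℝ)) x ∂νt) = (νt K).toReal :=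
      integral_indicator_one hK.isClosed.measurableSet
    rw [this] at key
    exact key
  -- combine
  have heqn : ∀ n, ∫ x, φf n x ∂νt = ∫ xq, F n xq ∂ν :=
    fun n => hreal (φf n) (φf n).continuous (hφc n)
  rw [show (fun n => ∫ x, φf n x ∂νt) = fun n => ∫ xq, F n xq ∂ν from funext heqn] at hνtconv
  have hfinal : (νt K).toReal = ∫ xq, fK xq ∂ν := tendsto_nhds_unique hνtconv houter
  refine ⟨hfKmeas, hfKint, ?_⟩
  rw [← hfinal, ENNReal.ofReal_toReal hK.measure_lt_top.ne]

lemma fK_support (μHp : Measure ↥Hp) (K : Set X) (xq : X ⧸ Hp)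
    (h : (μHp {y : ↥Hp | Quotient.out xq * ↑y ∈ K}).toReal ≠ 0) :
    xq ∈ (QuotientGroup.mk '' K : Set (X ⧸ Hp)) := by
  have hne : μHp {y : ↥Hp | Quotient.out xq * ↑y ∈ K} ≠ 0 := fun h0 => h (by simp [h0])
  obtain ⟨y, hy⟩ := nonempty_of_measure_ne_zero hne
  exact ⟨Quotient.out xq * ↑y, hy, mk_out_mul xq y⟩

end Aux

lemma null_of_compact_null {Y : Type} [TopologicalSpace Y] [MeasurableSpace Y]
    [OpensMeasurableSpace Y] [T2Space Y] [SigmaCompactSpace Y] (μ : Measure Y) [μ.Regular]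
    {E : Set Y} (hE : MeasurableSet E) (h : ∀ K, K ⊆ E → IsCompact K → μ K = 0) : μ E = 0 := by
  have hcov : E = ⋃ n, E ∩ compactCovering Y n := by
    rw [← Set.inter_iUnion, iUnion_compactCovering, Set.inter_univ]
  rw [hcov]
  refine measure_iUnion_null fun n => ?_
  have hCc : IsCompact (compactCovering Y n) := isCompact_compactCovering Y n
  have hmeas : MeasurableSet (E ∩ compactCovering Y n) := hE.inter hCc.isClosed.measurableSet
  have hfin : μ (E ∩ compactCovering Y n) ≠ ⊤ :=
    (lt_of_le_of_lt (measure_mono Set.inter_subset_right) hCc.measure_lt_top).ne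
  rw [hmeas.measure_eq_iSup_isCompact_of_ne_top hfin]
  simp only [ENNReal.iSup_eq_zero]
  intro K
  by_cases hK : K ⊆ E ∩ compactCovering Y n
  · by_cases hKc : IsCompact K
    · simp [hK, hKc, h K (hK.trans Set.inter_subset_left) hKc]
    · simp [hKc]
  · simp [hK]

/-- The correspondence `ν ↦ ν̃` preserves absolute continuity and
mutual singularity of measures. Here `ν̃` is characterised by
`∫ φ dν̃ = ∫_{Ĝ/H⊥} (∫_{H⊥} φ(x·y) dμ_{H⊥}(y)) dν(ẋ)` for all continuous compactly
supported `φ : Ĝ → ℂ`. -/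
theorem statement1
    {G : Type} [CommGroup G] [TopologicalSpace G] [IsTopologicalGroup G]
    [LocallyCompactSpace G] [SecondCountableTopology G] [T2Space G]
    (H : Subgroup G) (hHclosed : IsClosed (H : Set G))
    [MeasurableSpace (PontryaginDual G)] [BorelSpace (PontryaginDual G)]
    (Hp : Subgroup (PontryaginDual G))
    (hHp : ∀ y : PontryaginDual G, y ∈ Hp ↔ ∀ h ∈ H, y h = 1)
    [MeasurableSpace ↥Hp] [BorelSpace ↥Hp]
    (μHp : Measure ↥Hp) [μHp.IsHaarMeasure]
    [MeasurableSpace (PontryaginDual G ⧸ Hp)] [BorelSpace (PontryaginDual G ⧸ Hp)]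
    (ν₁ ν₂ : Measure (PontryaginDual G ⧸ Hp)) [ν₁.Regular] [ν₂.Regular]
    (νt₁ νt₂ : Measure (PontryaginDual G)) [νt₁.Regular] [νt₂.Regular]
    (hνt₁ : ∀ φ : PontryaginDual G → ℂ, Continuous φ → HasCompactSupport φ →
      ∫ x, φ x ∂νt₁ =
        ∫ xq : PontryaginDual G ⧸ Hp, (∫ y : ↥Hp, φ (Quotient.out xq * ↑y) ∂μHp) ∂ν₁)
    (hνt₂ : ∀ φ : PontryaginDual G → ℂ, Continuous φ → HasCompactSupport φ →
      ∫ x, φ x ∂νt₂ =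
        ∫ xq : PontryaginDual G ⧸ Hp, (∫ y : ↥Hp, φ (Quotient.out xq * ↑y) ∂μHp) ∂ν₂) :
    (ν₁ ≪ ν₂ → νt₁ ≪ νt₂) ∧ (ν₁ ⟂ₘ ν₂ → νt₁ ⟂ₘ νt₂) := by
  haveI hsc : SecondCountableTopology (PontryaginDual G) :=
    (ContinuousMonoidHom.isInducing_toContinuousMap G Circle).secondCountableTopology
  have hclosed : IsClosed (Hp : Set (PontryaginDual G)) := by
    have heq : (Hp : Set (PontryaginDual G)) = ⋂ h ∈ H, {y : PontryaginDual G | y h = 1} := by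
      ext y; simpa [Set.mem_iInter] using hHp y
    rw [heq]
    refine isClosed_biInter fun h _ => ?_
    have hc : Continuous fun y : PontryaginDual G => (ContinuousMonoidHom.toContinuousMap y) h :=
      (continuous_eval_const h).comp
        (ContinuousMonoidHom.isInducing_toContinuousMap G Circle).continuous
    exact isClosed_eq hc continuous_const
  constructor
  · intro hac
    refine Measure.AbsolutelyContinuous.mk fun E hE hE0 => ?_
    refine null_of_compact_null νt₁ hE fun K hKE hK => ?_
    obtain ⟨m1, i1, eq1⟩ := tilde_formula hclosed μHp ν₁ νt₁ hνt₁ hK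
    obtain ⟨m2, i2, eq2⟩ := tilde_formula hclosed μHp ν₂ νt₂ hνt₂ hK
    have h2 : νt₂ K = 0 := measure_mono_null hKE hE0
    rw [eq2] at h2
    have hnn : 0 ≤ ∫ xq, (μHp {y : ↥Hp | Quotient.out xq * ↑y ∈ K}).toReal ∂ν₂ :=
      integral_nonneg fun xq => ENNReal.toReal_nonneg
    have hint0 : ∫ xq, (μHp {y : ↥Hp | Quotient.out xq * ↑y ∈ K}).toReal ∂ν₂ = 0 :=
      le_antisymm (ENNReal.ofReal_eq_zero.1 h2) hnn
    have hae2 : (fun xq => (μHp {y : ↥Hp | Quotient.out xq * ↑y ∈ K}).toReal) =ᵐ[ν₂] 0 :=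
      (integral_eq_zero_iff_of_nonneg (fun xq => ENNReal.toReal_nonneg) i2).1 hint0
    have hae1 : (fun xq => (μHp {y : ↥Hp | Quotient.out xq * ↑y ∈ K}).toReal) =ᵐ[ν₁] 0 :=
      hae2.filter_mono hac.ae_le
    rw [eq1, integral_eq_zero_of_ae hae1]
    simp
  · rintro ⟨s, hsm, h1, h2⟩
    have hmk : Measurable (QuotientGroup.mk : PontryaginDual G → PontryaginDual G ⧸ Hp) :=
      QuotientGroup.continuous_mk.measurable
    refine ⟨QuotientGroup.mk ⁻¹' s, hmk hsm, ?_, ?_⟩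
    · refine null_of_compact_null νt₁ (hmk hsm) fun K hKE hK => ?_
      obtain ⟨m1, i1, eq1⟩ := tilde_formula hclosed μHp ν₁ νt₁ hνt₁ hK
      have hsub : {xq : PontryaginDual G ⧸ Hp |
          ¬ (μHp {y : ↥Hp | Quotient.out xq * ↑y ∈ K}).toReal = 0} ⊆ s := by
        intro xq hxq
        obtain ⟨x, hxK, rfl⟩ := fK_support μHp K xq hxq
        exact hKE hxK
      have hae : (fun xq => (μHp {y : ↥Hp | Quotient.out xq * ↑y ∈ K}).toReal) =ᵐ[ν₁] 0 := by
        rw [Filter.EventuallyEq, ae_iff]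
        simpa using measure_mono_null hsub h1
      rw [eq1, integral_eq_zero_of_ae hae]
      simp
    · have hco : (QuotientGroup.mk ⁻¹' s)ᶜ
          = QuotientGroup.mk ⁻¹' (sᶜ) := (Set.preimage_compl).symm
      rw [hco]
      refine null_of_compact_null νt₂ (hmk hsm.compl) fun K hKE hK => ?_
      obtain ⟨m2, i2, eq2⟩ := tilde_formula hclosed μHp ν₂ νt₂ hνt₂ hK
      have hsub : {xq : PontryaginDual G ⧸ Hp |
          ¬ (μHp {y : ↥Hp | Quotient.out xq * ↑y ∈ K}).toReal = 0} ⊆ sᶜ := by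
        intro xq hxq
        obtain ⟨x, hxK, rfl⟩ := fK_support μHp K xq hxq
        exact hKE hxK
      have hae : (fun xq => (μHp {y : ↥Hp | Quotient.out xq * ↑y ∈ K}).toReal) =ᵐ[ν₂] 0 := by
        rw [Filter.EventuallyEq, ae_iff]
        simpa using measure_mono_null hsub h2
      rw [eq2, integral_eq_zero_of_ae hae]
      simp
end

section
/- Let E be a separable complex Hilbert space and let φ : G × (Ĝ/H⊥) → E be continuous with compact support. Define f_φ(g,ẋ) := ∫_H ⟨ẋ,h⟩ φ(g·h, ẋ) dμ_H(h), where ⟨ẋ,h⟩ := x(h) for any representative x ∈ Ĝ of ẋ (this value does not depend on the representative). Then f_φ is a well-defined continuous function on G × (Ĝ/H⊥), it satisfies the covariance identity f_φ(g·h, ẋ) = conj(⟨ẋ,h⟩)·f_φ(g,ẋ) for all g ∈ G, h ∈ H, ẋ ∈ Ĝ/H⊥, and the image of the support of f_φ under the map q × id : G × (Ĝ/H⊥) → (G/H) × (Ĝ/H⊥) has compact closure. -/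
open MeasureTheory Complex Topology
open scoped ENNReal NNReal Pointwise

/-- For `φ : G × (Ĝ/H⊥) → E` continuous with compact support, the
function `f_φ(g,ẋ) = ∫_H ⟨ẋ,h⟩ φ(g·h,ẋ) dμ_H(h)` is well defined (the pairing does not
depend on the representative), continuous, satisfies the covariance identity
`f_φ(g·h,ẋ) = conj⟨ẋ,h⟩·f_φ(g,ẋ)`, and the image of its support under `q × id` has
compact closure. -/
theorem statement3
    {G : Type} [CommGroup G] [TopologicalSpace G] [IsTopologicalGroup G]
    [LocallyCompactSpace G] [SecondCountableTopology G] [T2Space G]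
    (H : Subgroup G) (hHclosed : IsClosed (H : Set G))
    [MeasurableSpace ↥H] [BorelSpace ↥H]
    (μH : Measure ↥H) [μH.IsHaarMeasure]
    (Hp : Subgroup (PontryaginDual G))
    (hHp : ∀ y : PontryaginDual G, y ∈ Hp ↔ ∀ h ∈ H, y h = 1)
    {E : Type} [NormedAddCommGroup E] [InnerProductSpace ℂ E] [CompleteSpace E]
    [SecondCountableTopology E]
    (φ : G × (PontryaginDual G ⧸ Hp) → E)
    (hφcont : Continuous φ) (hφsupp : HasCompactSupport φ)
    (f : G × (PontryaginDual G ⧸ Hp) → E)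
    (hf : ∀ (g : G) (xq : PontryaginDual G ⧸ Hp),
      f (g, xq) = ∫ h : ↥H, ((Quotient.out xq) (h : G) : ℂ) • φ (g * ↑h, xq) ∂μH) :
    -- the pairing ⟨ẋ,h⟩ is independent of the representative of the coset
    (∀ x x' : PontryaginDual G,
      (QuotientGroup.mk x : PontryaginDual G ⧸ Hp) = QuotientGroup.mk x' →
      ∀ h ∈ H, x h = x' h) ∧
    Continuous f ∧
    (∀ (g : G) (h : ↥H) (xq : PontryaginDual G ⧸ Hp),
      f (g * ↑h, xq) =
        (starRingEnd ℂ) ((Quotient.out xq) (h : G) : ℂ) • f (g, xq)) ∧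
    IsCompact (closure
      ((fun p : G × (PontryaginDual G ⧸ Hp) =>
        ((QuotientGroup.mk p.1 : G ⧸ H), p.2)) '' Function.support f)) := by
  -- Part 1: independence of representative
  have indep : ∀ x x' : PontryaginDual G,
      (QuotientGroup.mk x : PontryaginDual G ⧸ Hp) = QuotientGroup.mk x' →
      ∀ h ∈ H, x h = x' h := by
    intro x x' hxx' h hh
    have hm : x⁻¹ * x' ∈ Hp := QuotientGroup.eq.mp hxx'
    have h1 : (x⁻¹ * x') h = 1 := (hHp _).mp hm h hh
    have h2 : (x h)⁻¹ * x' h = 1 := h1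
    rw [inv_mul_eq_one] at h2
    exact h2
  -- evaluation pairing on the dual is continuous
  haveI : ContinuousEval (PontryaginDual G) G Circle :=
    (inferInstance : ContinuousEval (ContinuousMonoidHom G Circle) G Circle)
  have ebase : Continuous (fun p : PontryaginDual G × G => (p.1 p.2 : ℂ)) :=
    continuous_induced_dom.comp continuous_eval
  -- the pairing descends continuously to the quotient
  set P : (PontryaginDual G ⧸ Hp) × ↥H → ℂ :=
    fun q => ((Quotient.out q.1) (q.2 : G) : ℂ) with hP
  have hout : ∀ xq : PontryaginDual G ⧸ Hp,
      (QuotientGroup.mk (Quotient.out xq) : PontryaginDual G ⧸ Hp) = xq := fun xq =>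
    QuotientGroup.out_eq' xq
  have hPmk : ∀ (x : PontryaginDual G) (h : ↥H),
      P ((QuotientGroup.mk x : PontryaginDual G ⧸ Hp), h) = (x (h : G) : ℂ) := by
    intro x h
    have := indep (Quotient.out (QuotientGroup.mk x : PontryaginDual G ⧸ Hp)) x
      (by rw [hout]) h h.2
    simp [hP, this]
  have Pcont : Continuous P := by
    have hq : IsQuotientMap (Prod.map
        (QuotientGroup.mk : PontryaginDual G → PontryaginDual G ⧸ Hp) (id : ↥H → ↥H)) :=
      ((QuotientGroup.isOpenQuotientMap_mk).prodMap IsOpenQuotientMap.id).isQuotientMap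
    rw [hq.continuous_iff]
    have : (P ∘ Prod.map (QuotientGroup.mk : PontryaginDual G → PontryaginDual G ⧸ Hp) id) =
        fun p : PontryaginDual G × ↥H => (p.1 (p.2 : G) : ℂ) := by
      funext p; exact hPmk p.1 p.2
    rw [this]
    exact ebase.comp (continuous_fst.prodMk (continuous_subtype_val.comp continuous_snd))
  -- standing instances
  haveI : LocallyCompactSpace ↥H := hHclosed.locallyCompactSpace
  haveI : SecondCountableTopology (PontryaginDual G) :=
    (ContinuousMonoidHom.isEmbedding_toContinuousMap G Circle).secondCountableTopology
  -- Part 2: continuity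
  have hfc : Continuous f := by
    rw [continuous_iff_continuousAt]
    intro p₀
    obtain ⟨U, U_cpct, U_nhds⟩ := exists_compact_mem_nhds p₀.1
    have K1c : IsCompact (Prod.fst '' tsupport φ) := hφsupp.image continuous_fst
    have Cc : IsCompact (U⁻¹ * (Prod.fst '' tsupport φ)) := U_cpct.inv.mul K1c
    set s : Set ↥H := ((↑) : ↥H → G) ⁻¹' (U⁻¹ * (Prod.fst '' tsupport φ)) with hs_def
    have hs : IsCompact s :=
      (hHclosed.isClosedEmbedding_subtypeVal).isCompact_preimage Cc
    set F : (G × (PontryaginDual G ⧸ Hp)) → ↥H → E :=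
      fun p h => P (p.2, h) • φ (p.1 * (h : G), p.2) with hF
    have hFc : Continuous (Function.uncurry F) := by
      apply Continuous.smul
      · exact Pcont.comp (continuous_fst.snd.prodMk continuous_snd)
      · exact hφcont.comp
          ((continuous_fst.fst.mul (continuous_subtype_val.comp continuous_snd)).prodMk
            continuous_fst.snd)
    have cont2 : Continuous
        (fun p : G × (PontryaginDual G ⧸ Hp) => ∫ h in s, F p h ∂μH) :=
      continuous_parametric_integral_of_continuous hFc hs
    have key : f =ᶠ[nhds p₀]
        fun p : G × (PontryaginDual G ⧸ Hp) => ∫ h in s, F p h ∂μH := by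
      filter_upwards [continuousAt_fst.preimage_mem_nhds U_nhds] with p hp
      obtain ⟨g, xq⟩ := p
      rw [hf]
      refine (setIntegral_eq_integral_of_forall_compl_eq_zero fun h hh => ?_).symm
      have hφ0 : φ (g * (h : G), xq) = 0 := by
        by_contra hne
        apply hh
        have hmem : g * (h : G) ∈ Prod.fst '' tsupport φ :=
          ⟨(g * (h : G), xq), subset_closure (Function.mem_support.mpr hne), rfl⟩
        have heq : (h : G) = g⁻¹ * (g * (h : G)) := by group
        rw [hs_def, Set.mem_preimage, heq]
        exact Set.mul_mem_mul (Set.inv_mem_inv.mpr hp) hmem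
      simp [hF, hφ0]
    exact cont2.continuousAt.congr key.symm
  refine ⟨indep, hfc, ?_, ?_⟩
  -- Part 3: covariance
  · intro g h₀ xq
    set χ : PontryaginDual G := Quotient.out xq with hχ
    set T : ↥H → E := fun h => ((χ ((h₀⁻¹ * h : ↥H) : G) : ℂ)) • φ (g * (h : G), xq) with hT
    have step1 : f (g * ↑h₀, xq) = ∫ h, T (h₀ * h) ∂μH := by
      rw [hf]
      congr 1
      funext h
      simp [hT, hχ, mul_assoc, inv_mul_cancel_left]
    rw [step1, integral_mul_left_eq_self T h₀]
    have step2 : ∀ h : ↥H, T h =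
        (starRingEnd ℂ) ((χ ((h₀ : ↥H) : G) : ℂ)) •
          (((χ ((h : ↥H) : G) : ℂ)) • φ (g * (h : G), xq)) := by
      intro h
      simp only [hT, Subgroup.coe_mul, InvMemClass.coe_inv, map_mul, map_inv, Circle.coe_mul,
        Circle.coe_inv_eq_conj, mul_smul]
    simp_rw [step2]
    rw [integral_smul, hf]
  -- Part 4: compact closure of the projected support
  · have hHpclosed : IsClosed (Hp : Set (PontryaginDual G)) := by
      have hset : (Hp : Set (PontryaginDual G)) =
          ⋂ h ∈ H, {y : PontryaginDual G | y h = 1} := by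
        ext y
        simp [SetLike.mem_coe, hHp y, Set.mem_iInter]
      rw [hset]
      exact isClosed_biInter fun h _ =>
        isClosed_singleton.preimage (ContinuousEvalConst.continuous_eval_const h)
    haveI : IsClosed ((Hp : Set (PontryaginDual G))) := hHpclosed
    haveI : IsClosed ((H : Set G)) := hHclosed
    have hcont' : Continuous (fun p : G × (PontryaginDual G ⧸ Hp) =>
        ((QuotientGroup.mk p.1 : G ⧸ H), p.2)) :=
      ((continuous_quotient_mk'.comp continuous_fst).prodMk continuous_snd)
    have hK'c : IsCompact ((fun p : G × (PontryaginDual G ⧸ Hp) =>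
        ((QuotientGroup.mk p.1 : G ⧸ H), p.2)) '' tsupport φ) :=
      hφsupp.image hcont'
    have hK'cl : IsClosed ((fun p : G × (PontryaginDual G ⧸ Hp) =>
        ((QuotientGroup.mk p.1 : G ⧸ H), p.2)) '' tsupport φ) := hK'c.isClosed
    have hsub : (fun p : G × (PontryaginDual G ⧸ Hp) =>
          ((QuotientGroup.mk p.1 : G ⧸ H), p.2)) '' Function.support f ⊆
        (fun p : G × (PontryaginDual G ⧸ Hp) =>
          ((QuotientGroup.mk p.1 : G ⧸ H), p.2)) '' tsupport φ := by
      rintro _ ⟨⟨g, xq⟩, hgf, rfl⟩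
      have hgf' : f (g, xq) ≠ 0 := hgf
      have hex : ∃ h : ↥H, ((Quotient.out xq) ((h : ↥H) : G) : ℂ) • φ (g * (h : G), xq) ≠ 0 := by
        by_contra hall
        push_neg at hall
        apply hgf'
        rw [hf]
        simp_rw [hall]
        exact integral_zero _ _
      obtain ⟨h, hne⟩ := hex
      have hφne : φ (g * (h : G), xq) ≠ 0 := fun hz => hne (by rw [hz, smul_zero])
      refine ⟨(g * (h : G), xq), subset_closure (Function.mem_support.mpr hφne), ?_⟩
      have hmk : (QuotientGroup.mk (g * (h : G)) : G ⧸ H) = QuotientGroup.mk g := by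
        rw [QuotientGroup.eq]
        have heq : (g * (h : G))⁻¹ * g = (h : G)⁻¹ := by group
        rw [heq]
        exact H.inv_mem h.2
      simp [hmk]
    exact hK'c.of_isClosed_subset isClosed_closure (closure_minimal hsub hK'cl)
end

section
/- Let E be a separable complex Hilbert space and let f : G × (Ĝ/H⊥) → E be a continuous function satisfying the covariance identity f(g·h, ẋ) = conj(⟨ẋ,h⟩)·f(g,ẋ) for all g ∈ G, h ∈ H, ẋ ∈ Ĝ/H⊥, and such that for each ẋ the function q(g) ↦ ‖f(g,ẋ)‖ (which is well defined on G/H by the covariance identity) has compact support. Fix x ∈ Ĝ and a ∈ G. Then the functions F, F_a : G/H → E given by F(q(g)) = x(g)·f(g, π(x)) and F_a(q(g)) = x(g)·f(a⁻¹·g, π(x)) are well defined, continuous and compactly supported, and ∫_{G/H} F_a dμ_{G/H} = x(a) · ∫_{G/H} F dμ_{G/H}. -/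
open MeasureTheory Complex
open scoped ENNReal NNReal

/-- Let `f : G × (Ĝ/H⊥) → E` be continuous, covariant, with
compactly supported fibers on `G/H`. For fixed `x ∈ Ĝ` and `a ∈ G` the functions
`F(q(g)) = x(g)·f(g,π(x))` and `F_a(q(g)) = x(g)·f(a⁻¹·g,π(x))` are well defined,
continuous, compactly supported, and `∫ F_a dμ_{G/H} = x(a)·∫ F dμ_{G/H}`. -/
theorem statement4
    {G : Type} [CommGroup G] [TopologicalSpace G] [IsTopologicalGroup G]
    [LocallyCompactSpace G] [SecondCountableTopology G] [T2Space G]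
    (H : Subgroup G) (hHclosed : IsClosed (H : Set G))
    [MeasurableSpace (G ⧸ H)] [BorelSpace (G ⧸ H)]
    (μGH : Measure (G ⧸ H)) [μGH.IsHaarMeasure]
    (Hp : Subgroup (PontryaginDual G))
    (hHp : ∀ y : PontryaginDual G, y ∈ Hp ↔ ∀ h ∈ H, y h = 1)
    {E : Type} [NormedAddCommGroup E] [InnerProductSpace ℂ E] [CompleteSpace E]
    [SecondCountableTopology E]
    (f : G × (PontryaginDual G ⧸ Hp) → E) (hfcont : Continuous f)
    (hfcov : ∀ (g : G) (h : ↥H) (xq : PontryaginDual G ⧸ Hp),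
      f (g * ↑h, xq) = (starRingEnd ℂ) ((Quotient.out xq) (h : G) : ℂ) • f (g, xq))
    (hfsupp : ∀ xq : PontryaginDual G ⧸ Hp, ∃ u : G ⧸ H → ℝ,
      (∀ g : G, u (QuotientGroup.mk g) = ‖f (g, xq)‖) ∧ HasCompactSupport u)
    (x : PontryaginDual G) (a : G) :
    ∃ F Fa : G ⧸ H → E,
      (∀ g : G, F (QuotientGroup.mk g) =
        ((x g : ℂ)) • f (g, (QuotientGroup.mk x : PontryaginDual G ⧸ Hp))) ∧
      (∀ g : G, Fa (QuotientGroup.mk g) =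
        ((x g : ℂ)) • f (a⁻¹ * g, (QuotientGroup.mk x : PontryaginDual G ⧸ Hp))) ∧
      Continuous F ∧ Continuous Fa ∧
      HasCompactSupport F ∧ HasCompactSupport Fa ∧
      ∫ gq : G ⧸ H, Fa gq ∂μGH = ((x a : ℂ)) • ∫ gq : G ⧸ H, F gq ∂μGH := by
  classical
  set xq : PontryaginDual G ⧸ Hp := (QuotientGroup.mk x : PontryaginDual G ⧸ Hp) with hxq
  -- the chosen representative of `xq` agrees with `x` on `H`
  have hout : ∀ h : H, (Quotient.out xq) (h : G) = x (h : G) := by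
    intro h
    have h1 : (QuotientGroup.mk (Quotient.out xq) : PontryaginDual G ⧸ Hp) = xq :=
      QuotientGroup.out_eq' xq
    have h2 : x⁻¹ * Quotient.out xq ∈ Hp := by
      rw [hxq] at h1
      exact QuotientGroup.eq.mp h1.symm
    have h3 : ((x⁻¹ * Quotient.out xq) (h : G) : Circle) = 1 := (hHp _).mp h2 (h : G) h.2
    have h4 : (x (h : G))⁻¹ * (Quotient.out xq) (h : G) = 1 := h3
    exact inv_mul_eq_one.mp h4 |>.symm ▸ rfl
  -- covariance restated with `x`
  have hcov : ∀ (g : G) (h : H), f (g * (h : G), xq) =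
      (starRingEnd ℂ) ((x (h : G) : ℂ)) • f (g, xq) := by
    intro g h
    rw [hfcov g h xq, hout h]
  have hxmul : ∀ g : G, (x g : ℂ) * (starRingEnd ℂ) ((x g : ℂ)) = 1 := by
    intro g
    rw [← Circle.coe_inv_eq_conj, ← Circle.coe_mul, mul_inv_cancel, Circle.coe_one]
  -- the two functions on `G`
  set φ : G → E := fun g => (x g : ℂ) • f (g, xq) with hφdef
  set φa : G → E := fun g => (x g : ℂ) • f (a⁻¹ * g, xq) with hφadef
  have hφH : ∀ (g : G) (h : H), φ (g * (h : G)) = φ g := by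
    intro g h
    simp only [hφdef]
    rw [hcov g h, map_mul, Circle.coe_mul, smul_smul, mul_assoc, hxmul, mul_one]
  have hφaH : ∀ (g : G) (h : H), φa (g * (h : G)) = φa g := by
    intro g h
    simp only [hφadef]
    rw [show a⁻¹ * (g * (h : G)) = (a⁻¹ * g) * (h : G) from (mul_assoc _ _ _).symm,
      hcov (a⁻¹ * g) h, map_mul, Circle.coe_mul, smul_smul, mul_assoc, hxmul, mul_one]
  -- functions invariant under `H` factor through the quotient via `Quotient.out`
  have key : ∀ (ψ : G → E), (∀ (g : G) (h : H), ψ (g * (h : G)) = ψ g) →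
      ∀ g : G, ψ (Quotient.out (QuotientGroup.mk g : G ⧸ H)) = ψ g := by
    intro ψ hψ g
    have h1 : (QuotientGroup.mk (Quotient.out (QuotientGroup.mk g : G ⧸ H)) : G ⧸ H)
        = QuotientGroup.mk g := QuotientGroup.out_eq' _
    have h2 : g⁻¹ * Quotient.out (QuotientGroup.mk g : G ⧸ H) ∈ H :=
      QuotientGroup.eq.mp h1.symm
    have h3 := hψ g ⟨_, h2⟩
    simpa [mul_inv_cancel_left] using h3
  set F : G ⧸ H → E := fun gq => φ (Quotient.out gq) with hFdef
  set Fa : G ⧸ H → E := fun gq => φa (Quotient.out gq) with hFadef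
  have hF : ∀ g : G, F (QuotientGroup.mk g) = φ g := key φ hφH
  have hFa : ∀ g : G, Fa (QuotientGroup.mk g) = φa g := key φa hφaH
  -- continuity of φ, φa
  have hxc : Continuous fun g : G => (x g : ℂ) :=
    continuous_subtype_val.comp (map_continuous x)
  have hφc : Continuous φ :=
    hxc.smul (hfcont.comp (continuous_id.prodMk continuous_const))
  have hφac : Continuous φa :=
    hxc.smul (hfcont.comp ((continuous_const.mul continuous_id).prodMk continuous_const))
  have hqm : Topology.IsQuotientMap (QuotientGroup.mk : G → G ⧸ H) := QuotientGroup.isQuotientMap_mk H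
  have hFc : Continuous F := by
    rw [hqm.continuous_iff]
    have : (F ∘ QuotientGroup.mk : G → E) = φ := funext hF
    rw [this]; exact hφc
  have hFac : Continuous Fa := by
    rw [hqm.continuous_iff]
    have : (Fa ∘ QuotientGroup.mk : G → E) = φa := funext hFa
    rw [this]; exact hφac
  -- compact support
  obtain ⟨u, hu, hucomp⟩ := hfsupp xq
  have hxne : ∀ g : G, (x g : ℂ) ≠ 0 := fun g => Circle.coe_ne_zero _
  have hFsupp : HasCompactSupport F := by
    apply hucomp.mono
    intro gq hgq
    obtain ⟨g, rfl⟩ := QuotientGroup.mk_surjective gq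
    rw [Function.mem_support, hF g] at hgq
    have hfne : f (g, xq) ≠ 0 := fun h0 => hgq (by simp [hφdef, h0])
    simp only [Function.mem_support, hu g]
    exact norm_ne_zero_iff.mpr hfne
  have hFasupp : HasCompactSupport Fa := by
    have hcomp2 : HasCompactSupport
        (u ∘ (Homeomorph.mulLeft ((QuotientGroup.mk a : G ⧸ H)⁻¹))) :=
      hucomp.comp_isClosedEmbedding (Homeomorph.mulLeft _).isClosedEmbedding
    apply hcomp2.mono
    intro gq hgq
    obtain ⟨g, rfl⟩ := QuotientGroup.mk_surjective gq
    rw [Function.mem_support, hFa g] at hgq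
    have hfne : f (a⁻¹ * g, xq) ≠ 0 := fun h0 => hgq (by simp [hφadef, h0])
    have hmk : ((QuotientGroup.mk a : G ⧸ H)⁻¹ * QuotientGroup.mk g : G ⧸ H)
        = QuotientGroup.mk (a⁻¹ * g) := rfl
    simp only [Function.mem_support, Function.comp_apply, Homeomorph.coe_mulLeft, hmk, hu]
    exact norm_ne_zero_iff.mpr hfne
  -- the translation identity
  have htrans : ∀ gq : G ⧸ H, Fa gq =
      (x a : ℂ) • F ((QuotientGroup.mk a : G ⧸ H)⁻¹ * gq) := by
    intro gq
    obtain ⟨g, rfl⟩ := QuotientGroup.mk_surjective gq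
    have hmk : ((QuotientGroup.mk a : G ⧸ H)⁻¹ * QuotientGroup.mk g : G ⧸ H)
        = QuotientGroup.mk (a⁻¹ * g) := rfl
    rw [hFa g, hmk, hF (a⁻¹ * g)]
    simp only [hφdef, hφadef]
    rw [smul_smul, ← Circle.coe_mul,
      show x a * x (a⁻¹ * g) = x g by rw [map_mul, map_inv, mul_inv_cancel_left]]
  refine ⟨F, Fa, hF, hFa, hFc, hFac, hFsupp, hFasupp, ?_⟩
  calc ∫ gq : G ⧸ H, Fa gq ∂μGH
      = ∫ gq : G ⧸ H, (x a : ℂ) • F ((QuotientGroup.mk a : G ⧸ H)⁻¹ * gq) ∂μGH := by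
        exact integral_congr_ae (Filter.Eventually.of_forall htrans)
    _ = (x a : ℂ) • ∫ gq : G ⧸ H, F ((QuotientGroup.mk a : G ⧸ H)⁻¹ * gq) ∂μGH :=
        integral_smul _ _
    _ = (x a : ℂ) • ∫ gq : G ⧸ H, F gq ∂μGH := by
        rw [integral_mul_left_eq_self F ((QuotientGroup.mk a : G ⧸ H)⁻¹)]
end

section
/- Let ρ be a finite Radon measure on Ĝ, ν a Radon measure on Ĝ/H⊥ finite on compact sets, and α : Ĝ → [0,∞) a ν̃-integrable Borel function with ρ = α·ν̃ (ρ has density α with respect to ν̃). Then there exists a ν-integrable Borel function α' : Ĝ/H⊥ → [0,∞) such that the image measure ρ^π := π_*ρ satisfies ρ^π = α'·ν, and for ν̃-almost every x ∈ Ĝ one has α'(π(x)) = ∫_{H⊥} α(x·y) dμ_{H⊥}(y). -/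
open TopologicalSpace Set MeasureTheory

namespace Statement8Aux

attribute [local instance] Classical.propDecidable

variable {X Q : Type*} [TopologicalSpace X] [TopologicalSpace Q]

/-- closed set determined by a finite set of basis indices -/
def Fcl (b : ℕ → Set X) (A : Finset ℕ) : Set X := ⋂ k ∈ A, closure (b k)

lemma Fcl_closed (b : ℕ → Set X) (A : Finset ℕ) : IsClosed (Fcl b A) :=
  isClosed_biInter fun k _ => isClosed_closure

lemma Fcl_insert (b : ℕ → Set X) (i : ℕ) (A : Finset ℕ) :
    Fcl b (insert i A) = closure (b i) ∩ Fcl b A := by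
  simp [Fcl, Set.biInter_insert]

lemma Fcl_subset_of_mem (b : ℕ → Set X) {i : ℕ} {A : Finset ℕ} (h : i ∈ A) :
    Fcl b A ⊆ closure (b i) := Set.biInter_subset_of_mem h

/-- branch record of the refinement procedure -/
noncomputable def AF (π : X → Q) (b : ℕ → Set X) (K : Set X) (q : Q) : ℕ → Finset ℕ
  | 0 => ∅
  | i+1 => if (K ∩ π ⁻¹' {q} ∩ Fcl b (AF π b K q i) ∩ closure (b i)).Nonempty
      then insert i (AF π b K q i) else AF π b K q i

/-- the nested compact sets -/
def CS (π : X → Q) (b : ℕ → Set X) (K : Set X) (q : Q) (i : ℕ) : Set X :=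
  K ∩ π ⁻¹' {q} ∩ Fcl b (AF π b K q i)

lemma AF_succ (π : X → Q) (b : ℕ → Set X) (K : Set X) (q : Q) (i : ℕ) :
    AF π b K q (i+1) = if (K ∩ π ⁻¹' {q} ∩ Fcl b (AF π b K q i) ∩ closure (b i)).Nonempty
      then insert i (AF π b K q i) else AF π b K q i := rfl

lemma CS_succ (π : X → Q) (b : ℕ → Set X) (K : Set X) (q : Q) (i : ℕ) :
    CS π b K q (i+1) =
      if (CS π b K q i ∩ closure (b i)).Nonempty then CS π b K q i ∩ closure (b i)
      else CS π b K q i := by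
  simp only [CS, AF_succ]
  split_ifs with h
  · rw [Fcl_insert]; refine Eq.trans ?_ (if_pos h).symm; ext x
    simp only [Set.mem_inter_iff]; tauto
  · exact (if_neg h).symm

lemma CS_antitone (π : X → Q) (b : ℕ → Set X) (K : Set X) (q : Q) (i : ℕ) :
    CS π b K q (i+1) ⊆ CS π b K q i := by
  rw [CS_succ]; split_ifs with h
  · exact Set.inter_subset_left
  · exact subset_rfl

lemma CS_subset_K (π : X → Q) (b : ℕ → Set X) (K : Set X) (q : Q) (i : ℕ) :
    CS π b K q i ⊆ K := fun x hx => hx.1.1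

lemma CS_subset_fiber (π : X → Q) (b : ℕ → Set X) (K : Set X) (q : Q) (i : ℕ) :
    CS π b K q i ⊆ π ⁻¹' {q} := fun x hx => hx.1.2

lemma CS_isClosed [T2Space X] [T1Space Q] {π : X → Q} (hπ : Continuous π)
    (b : ℕ → Set X) {K : Set X} (hK : IsCompact K) (q : Q) (i : ℕ) :
    IsClosed (CS π b K q i) :=
  ((hK.isClosed.inter (isClosed_singleton.preimage hπ)).inter (Fcl_closed b _))

lemma CS_isCompact [T2Space X] [T1Space Q] {π : X → Q} (hπ : Continuous π)
    (b : ℕ → Set X) {K : Set X} (hK : IsCompact K) (q : Q) (i : ℕ) :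
    IsCompact (CS π b K q i) :=
  hK.of_isClosed_subset (CS_isClosed hπ b hK q i) (CS_subset_K π b K q i)

lemma CS_nonempty (π : X → Q) (b : ℕ → Set X) (K : Set X) {q : Q}
    (hq : q ∈ π '' K) (i : ℕ) : (CS π b K q i).Nonempty := by
  induction i with
  | zero =>
      obtain ⟨x, hx, rfl⟩ := hq
      exact ⟨x, ⟨hx, rfl⟩, by simp [Fcl, AF]⟩
  | succ i ih =>
      rw [CS_succ]; split_ifs with h
      · exact h
      · exact ih

lemma iInter_CS_nonempty [T2Space X] [T1Space Q] {π : X → Q} (hπ : Continuous π)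
    (b : ℕ → Set X) {K : Set X} (hK : IsCompact K) {q : Q} (hq : q ∈ π '' K) :
    (⋂ i, CS π b K q i).Nonempty :=
  IsCompact.nonempty_iInter_of_sequence_nonempty_isCompact_isClosed _
    (CS_antitone π b K q) (CS_nonempty π b K hq) (CS_isCompact hπ b hK q 0)
    (CS_isClosed hπ b hK q)

end Statement8Aux

namespace Statement8Aux

open TopologicalSpace Set

variable {X Q : Type*} [TopologicalSpace X] [TopologicalSpace Q]

lemma iInter_CS_subsingleton [T2Space X] [RegularSpace X] {π : X → Q} {b : ℕ → Set X}
    (hbasis : ∀ (x : X) (U : Set X), IsOpen U → x ∈ U → ∃ i, x ∈ b i ∧ b i ⊆ U)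
    (K : Set X) (q : Q) :
    Set.Subsingleton (⋂ i, CS π b K q i) := by
  intro x hx y hy
  by_contra hxy
  obtain ⟨i, hxi, hyi⟩ : ∃ i, x ∈ b i ∧ y ∉ closure (b i) := by
    have hopen : IsOpen ({y}ᶜ : Set X) := isOpen_compl_singleton
    have hmem : ({y}ᶜ : Set X) ∈ nhds x := hopen.mem_nhds (by simpa using hxy)
    obtain ⟨t, htx, htc, hts⟩ := exists_mem_nhds_isClosed_subset hmem
    obtain ⟨i, hxi, hbi⟩ := hbasis x (interior t) isOpen_interior (mem_interior_iff_mem_nhds.2 htx)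
    refine ⟨i, hxi, fun hc => ?_⟩
    have : y ∈ t := closure_minimal (hbi.trans interior_subset) htc hc
    exact (hts this) rfl
  have hne : (CS π b K q i ∩ closure (b i)).Nonempty :=
    ⟨x, Set.mem_iInter.1 hx i, subset_closure hxi⟩
  have : y ∈ CS π b K q i ∩ closure (b i) := by
    have := Set.mem_iInter.1 hy (i+1)
    rwa [CS_succ, if_pos hne] at this
  exact hyi this.2

lemma measurableSet_AF_eq [MeasurableSpace Q] {π : X → Q} {b : ℕ → Set X} {K : Set X}
    (himg : ∀ S : Set X, IsClosed S → MeasurableSet {q | (K ∩ π ⁻¹' {q} ∩ S).Nonempty})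
    (i : ℕ) (A : Finset ℕ) : MeasurableSet {q | AF π b K q i = A} := by
  induction i generalizing A with
  | zero =>
      by_cases h : (∅ : Finset ℕ) = A
      · have : {q : Q | AF π b K q 0 = A} = Set.univ := by
          ext q; simp [AF, h]
        rw [this]; exact MeasurableSet.univ
      · have : {q : Q | AF π b K q 0 = A} = ∅ := by
          ext q; simp only [Set.mem_setOf_eq, Set.mem_empty_iff_false, iff_false]
          exact fun hc => h hc
        rw [this]; exact MeasurableSet.empty
  | succ i ih =>
      have key : {q | AF π b K q (i+1) = A} =
          ⋃ A' : Finset ℕ,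
            (({q | AF π b K q i = A'} ∩
              (if insert i A' = A then
                {q | (K ∩ π ⁻¹' {q} ∩ (Fcl b A' ∩ closure (b i))).Nonempty} else (∅ : Set Q))) ∪
            ({q | AF π b K q i = A'} ∩
              (if A' = A then
                {q | (K ∩ π ⁻¹' {q} ∩ (Fcl b A' ∩ closure (b i))).Nonempty}ᶜ else (∅ : Set Q)))) := by
        ext q
        simp only [Set.mem_iUnion, Set.mem_union, Set.mem_inter_iff, Set.mem_setOf_eq,
          Set.mem_compl_iff]
        have hassoc : ∀ A' : Finset ℕ,
            (K ∩ π ⁻¹' {q} ∩ Fcl b A' ∩ closure (b i)) =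
            (K ∩ π ⁻¹' {q} ∩ (Fcl b A' ∩ closure (b i))) := fun A' => Set.inter_assoc _ _ _
        constructor
        · intro h
          refine ⟨AF π b K q i, ?_⟩
          rw [AF_succ] at h
          by_cases hne : (K ∩ π ⁻¹' {q} ∩ Fcl b (AF π b K q i) ∩ closure (b i)).Nonempty
          · left
            rw [if_pos hne] at h
            refine ⟨rfl, ?_⟩
            rw [if_pos h]
            rwa [hassoc] at hne
          · right
            rw [if_neg hne] at h
            refine ⟨rfl, ?_⟩
            rw [if_pos h]
            simp only [Set.mem_compl_iff, Set.mem_setOf_eq]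
            rw [← hassoc]
            exact hne
        · rintro ⟨A', ⟨hA', hcond⟩ | ⟨hA', hcond⟩⟩
          · split_ifs at hcond with hins
            · rw [AF_succ, hA', if_pos (by rwa [hassoc A'])]
              exact hins
            · exact absurd hcond (Set.notMem_empty q)
          · split_ifs at hcond with heq
            · rw [AF_succ, hA', if_neg (by rw [hassoc A']; exact hcond)]
              exact heq
            · exact absurd hcond (Set.notMem_empty q)
      rw [key]
      refine MeasurableSet.iUnion fun A' => MeasurableSet.union ?_ ?_
      · refine (ih A').inter ?_
        split_ifs
        · exact himg _ ((Fcl_closed b A').inter isClosed_closure)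
        · exact MeasurableSet.empty
      · refine (ih A').inter ?_
        split_ifs
        · exact (himg _ ((Fcl_closed b A').inter isClosed_closure)).compl
        · exact MeasurableSet.empty

lemma measurableSet_CS_subset [MeasurableSpace Q] {π : X → Q} {b : ℕ → Set X} {K : Set X}
    (himg : ∀ S : Set X, IsClosed S → MeasurableSet {q | (K ∩ π ⁻¹' {q} ∩ S).Nonempty})
    (hbo : ∀ i, IsOpen (b i)) (i j : ℕ) :
    MeasurableSet {q | CS π b K q i ⊆ b j} := by
  have key : {q | CS π b K q i ⊆ b j} =
      ⋃ A' : Finset ℕ, ({q | AF π b K q i = A'} ∩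
        {q | (K ∩ π ⁻¹' {q} ∩ (Fcl b A' ∩ (b j)ᶜ)).Nonempty}ᶜ) := by
    ext q
    simp only [Set.mem_iUnion, Set.mem_inter_iff, Set.mem_setOf_eq, Set.mem_compl_iff]
    constructor
    · intro h
      refine ⟨AF π b K q i, rfl, fun hc => ?_⟩
      obtain ⟨x, hx⟩ := hc
      rw [← Set.inter_assoc] at hx
      exact hx.2 (h hx.1)
    · rintro ⟨A', hA', hc⟩ x hx
      by_contra hxb
      exact hc ⟨x, by rw [← Set.inter_assoc]; exact ⟨by rwa [CS, hA'] at hx, hxb⟩⟩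
  rw [key]
  exact MeasurableSet.iUnion fun A' =>
    (measurableSet_AF_eq himg i A').inter
      (himg _ ((Fcl_closed b A').inter (hbo j).isClosed_compl)).compl

end Statement8Aux

namespace Statement8Aux

open TopologicalSpace Set

lemma exists_measurable_section
    {X Q : Type*} [TopologicalSpace X] [T2Space X] [LocallyCompactSpace X]
    [SecondCountableTopology X] [MeasurableSpace X] [BorelSpace X] [Nonempty X]
    [TopologicalSpace Q] [T2Space Q] [MeasurableSpace Q] [OpensMeasurableSpace Q]
    {π : X → Q} (hcont : Continuous π) (hsurj : Function.Surjective π) :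
    ∃ s : Q → X, Measurable s ∧ ∀ q, π (s q) = q := by
  classical
  -- countable basis
  obtain ⟨D, hDc, hDne, hDb⟩ := exists_countable_basis X
  obtain ⟨b, hb⟩ : ∃ b : ℕ → Set X, insert (∅ : Set X) D = Set.range b :=
    (hDc.insert ∅).exists_eq_range (Set.insert_nonempty _ _)
  have hbo : ∀ i, IsOpen (b i) := by
    intro i
    have : b i ∈ insert (∅ : Set X) D := hb ▸ Set.mem_range_self i
    rcases this with h | h
    · rw [h]; exact isOpen_empty
    · exact hDb.isOpen h
  have hbasis : ∀ (x : X) (U : Set X), IsOpen U → x ∈ U → ∃ i, x ∈ b i ∧ b i ⊆ U := by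
    intro x U hU hx
    obtain ⟨v, hv, hxv, hvU⟩ := hDb.exists_subset_of_mem_open hx hU
    have : v ∈ Set.range b := by rw [← hb]; exact Set.mem_insert_of_mem _ hv
    obtain ⟨i, rfl⟩ := this
    exact ⟨i, hxv, hvU⟩
  -- compact covering
  set K : ℕ → Set X := compactCovering X with hK
  have hKc : ∀ n, IsCompact (K n) := isCompact_compactCovering X
  have himg : ∀ n, ∀ S : Set X, IsClosed S →
      MeasurableSet {q | (K n ∩ π ⁻¹' {q} ∩ S).Nonempty} := by
    intro n S hS
    have heq : {q | (K n ∩ π ⁻¹' {q} ∩ S).Nonempty} = π '' (K n ∩ S) := by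
      ext q
      constructor
      · rintro ⟨x, ⟨⟨hxK, hxq⟩, hxS⟩⟩
        exact ⟨x, ⟨hxK, hxS⟩, hxq⟩
      · rintro ⟨x, ⟨hxK, hxS⟩, rfl⟩
        exact ⟨x, ⟨⟨hxK, rfl⟩, hxS⟩⟩
    rw [heq]
    exact (((hKc n).inter_right hS).image hcont).isClosed.measurableSet
  -- membership in compact images
  have hexq : ∀ q : Q, ∃ n, q ∈ π '' K n := by
    intro q
    obtain ⟨x, rfl⟩ := hsurj q
    obtain ⟨n, hn⟩ : ∃ n, x ∈ K n := by
      have := iUnion_compactCovering X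
      have hx : x ∈ ⋃ n, compactCovering X n := by rw [this]; trivial
      simpa using hx
    exact ⟨n, ⟨x, hn, rfl⟩⟩
  -- per-compact selection
  set sel : ℕ → Q → X := fun n q =>
    if h : (⋂ i, CS π b (K n) q i).Nonempty then h.some else Classical.arbitrary X with hsel
  have hsel_mem : ∀ n q, q ∈ π '' K n → ∀ i, sel n q ∈ CS π b (K n) q i := by
    intro n q hq i
    have hne := iInter_CS_nonempty hcont b (hKc n) hq
    rw [hsel]
    simp only [dif_pos hne]
    exact Set.mem_iInter.1 hne.some_mem i
  have hsel_sec : ∀ n q, q ∈ π '' K n → π (sel n q) = q := fun n q hq =>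
    CS_subset_fiber π b (K n) q 0 (hsel_mem n q hq 0)
  -- key measurability on pieces
  have hpiece : ∀ n j, MeasurableSet {q | q ∈ π '' K n ∧ sel n q ∈ b j} := by
    intro n j
    have heq : {q | q ∈ π '' K n ∧ sel n q ∈ b j} =
        (π '' K n) ∩ ⋃ i, {q | CS π b (K n) q i ⊆ b j} := by
      ext q
      simp only [Set.mem_setOf_eq, Set.mem_inter_iff, Set.mem_iUnion]
      constructor
      · rintro ⟨hq, hsq⟩
        refine ⟨hq, ?_⟩
        by_contra hc
        push_neg at hc
        have hc' : ∀ i, (CS π b (K n) q i ∩ (b j)ᶜ).Nonempty := by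
          intro i
          obtain ⟨x, hx, hxb⟩ := Set.not_subset.1 (hc i)
          exact ⟨x, hx, hxb⟩
        have hno : (⋂ i, CS π b (K n) q i ∩ (b j)ᶜ).Nonempty := by
          refine IsCompact.nonempty_iInter_of_sequence_nonempty_isCompact_isClosed _
            (fun i => Set.inter_subset_inter_left _ (CS_antitone π b (K n) q i)) hc'
            (((CS_isCompact hcont b (hKc n) q 0)).inter_right (hbo j).isClosed_compl)
            (fun i => (CS_isClosed hcont b (hKc n) q i).inter (hbo j).isClosed_compl)
        obtain ⟨y, hy⟩ := hno
        have hyC : y ∈ ⋂ i, CS π b (K n) q i :=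
          Set.mem_iInter.2 fun i => (Set.mem_iInter.1 hy i).1
        have hyb : y ∉ b j := (Set.mem_iInter.1 hy 0).2
        have hyeq : y = sel n q :=
          iInter_CS_subsingleton hbasis (K n) q hyC
            (Set.mem_iInter.2 (hsel_mem n q hq))
        exact hyb (hyeq ▸ hsq)
      · rintro ⟨hq, i, hi⟩
        exact ⟨hq, hi (hsel_mem n q hq i)⟩
    rw [heq]
    exact (((hKc n).image hcont).isClosed.measurableSet).inter
      (MeasurableSet.iUnion fun i => measurableSet_CS_subset (himg n) hbo i j)
  -- global gluing
  set s : Q → X := fun q => sel (Nat.find (hexq q)) q with hs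
  refine ⟨s, ?_, fun q => hsel_sec _ q (Nat.find_spec (hexq q))⟩
  have hBn : ∀ n, MeasurableSet {q | Nat.find (hexq q) = n} := by
    intro n
    have heq : {q | Nat.find (hexq q) = n} =
        (π '' K n) ∩ (⋂ m < n, (π '' K m)ᶜ) := by
      ext q
      simp only [Set.mem_setOf_eq, Set.mem_inter_iff, Set.mem_iInter, Set.mem_compl_iff]
      constructor
      · rintro rfl
        exact ⟨Nat.find_spec (hexq q), fun m hm => Nat.find_min (hexq q) hm⟩
      · rintro ⟨h1, h2⟩
        exact le_antisymm (Nat.find_le h1) (by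
          by_contra hc
          push_neg at hc
          exact h2 _ hc (Nat.find_spec (hexq q)))
    rw [heq]
    exact (((hKc n).image hcont).isClosed.measurableSet).inter
      (MeasurableSet.biInter (Set.to_countable _) fun m _ =>
        (((hKc m).image hcont).isClosed.measurableSet).compl)
  have hsb : ∀ j, MeasurableSet (s ⁻¹' (b j)) := by
    intro j
    have heq : s ⁻¹' (b j) =
        ⋃ n, {q | Nat.find (hexq q) = n} ∩ {q | q ∈ π '' K n ∧ sel n q ∈ b j} := by
      ext q
      simp only [Set.mem_preimage, Set.mem_iUnion, Set.mem_inter_iff, Set.mem_setOf_eq]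
      constructor
      · intro h
        exact ⟨Nat.find (hexq q), rfl, Nat.find_spec (hexq q), h⟩
      · rintro ⟨n, rfl, _, h⟩
        exact h
    rw [heq]
    exact MeasurableSet.iUnion fun n => (hBn n).inter (hpiece n _)
  apply measurable_of_isOpen
  intro U hU
  have heq : s ⁻¹' U = ⋃ j, ⋃ (_ : b j ⊆ U), s ⁻¹' (b j) := by
    ext q
    simp only [Set.mem_preimage, Set.mem_iUnion]
    constructor
    · intro h
      obtain ⟨j, hj1, hj2⟩ := hbasis (s q) U hU h
      exact ⟨j, hj2, hj1⟩
    · rintro ⟨j, hjU, hj⟩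
      exact hjU hj
  rw [heq]
  exact MeasurableSet.iUnion fun j => MeasurableSet.iUnion fun hjU => hsb j

end Statement8Aux

namespace Statement8Aux

open MeasureTheory Set
open scoped ENNReal NNReal

lemma compact_le_of_integral_eq {X : Type*} [TopologicalSpace X] [T2Space X]
    [LocallyCompactSpace X] [MeasurableSpace X] [BorelSpace X]
    (μ μ' : Measure X) [μ.Regular] [μ'.Regular]
    (h : ∀ φ : X → ℝ, Continuous φ → HasCompactSupport φ → ∫ x, φ x ∂μ = ∫ x, φ x ∂μ')
    {K : Set X} (hK : IsCompact K) : μ K ≤ μ' K := by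
  refine ENNReal.le_of_forall_pos_le_add fun ε hε htop => ?_
  have hlt : μ' K < μ' K + ε :=
    ENNReal.lt_add_right htop.ne (by exact_mod_cast hε.ne')
  obtain ⟨U, hKU, hUopen, hU⟩ := Set.exists_isOpen_lt_of_lt K _ hlt
  obtain ⟨f, hfK, hfU, hfc, hf01⟩ :=
    exists_continuous_one_zero_of_isCompact hK hUopen.isClosed_compl
      (Set.disjoint_left.2 fun x hxK hxU => hxU (hKU hxK))
  have hμU : μ' U < ∞ := hU.trans_le le_top
  have fint : Integrable (⇑f) μ := f.continuous.integrable_of_hasCompactSupport hfc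
  have fint' : Integrable (⇑f) μ' := f.continuous.integrable_of_hasCompactSupport hfc
  have hKm : MeasurableSet K := hK.isClosed.measurableSet
  have hUm : MeasurableSet U := hUopen.measurableSet
  have stepA : (μ K).toReal ≤ ∫ x, f x ∂μ := by
    have : ∫ x, K.indicator (fun _ => (1:ℝ)) x ∂μ = (μ K).toReal := by
      rw [integral_indicator_const _ hKm]; simp [Measure.real]
    rw [← this]
    refine integral_mono ?_ fint ?_
    · rw [integrable_indicator_iff hKm]
      exact integrableOn_const hK.measure_lt_top.ne
    · intro x
      by_cases hx : x ∈ K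
      · simp only [Set.indicator_of_mem hx]
        exact (hfK hx).symm.le
      · simp only [Set.indicator_of_notMem hx]
        exact (hf01 x).1
  have stepC : ∫ x, f x ∂μ' ≤ (μ' U).toReal := by
    have : ∫ x, U.indicator (fun _ => (1:ℝ)) x ∂μ' = (μ' U).toReal := by
      rw [integral_indicator_const _ hUm]; simp [Measure.real]
    rw [← this]
    refine integral_mono fint' ?_ ?_
    · rw [integrable_indicator_iff hUm]
      exact integrableOn_const hμU.ne
    · intro x
      by_cases hx : x ∈ U
      · simp only [Set.indicator_of_mem hx]
        exact (hf01 x).2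
      · simp only [Set.indicator_of_notMem hx]
        exact le_of_eq (hfU hx)
  have := stepA.trans ((h f f.continuous hfc).le.trans stepC)
  have hfin : μ K ≤ μ' U :=
    (ENNReal.toReal_le_toReal hK.measure_lt_top.ne hμU.ne).1 this
  exact hfin.trans hU.le

lemma measure_eq_of_integral_eq {X : Type*} [TopologicalSpace X] [T2Space X]
    [LocallyCompactSpace X] [MeasurableSpace X] [BorelSpace X]
    (μ μ' : Measure X) [μ.Regular] [μ'.Regular]
    (h : ∀ φ : X → ℝ, Continuous φ → HasCompactSupport φ → ∫ x, φ x ∂μ = ∫ x, φ x ∂μ') :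
    μ = μ' := by
  have hKeq : ∀ K : Set X, IsCompact K → μ K = μ' K := fun K hK =>
    le_antisymm (compact_le_of_integral_eq μ μ' h hK)
      (compact_le_of_integral_eq μ' μ (fun φ hφ hφc => (h φ hφ hφc).symm) hK)
  have hUeq : ∀ U : Set X, IsOpen U → μ U = μ' U := by
    intro U hU
    rw [hU.measure_eq_iSup_isCompact _ , hU.measure_eq_iSup_isCompact]
    congr 1
    ext K
    congr 1
    ext hKU
    congr 1
    ext hK
    exact hKeq K hK
  ext s hs
  rw [Set.measure_eq_iInf_isOpen s μ, Set.measure_eq_iInf_isOpen s μ']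
  congr 1
  ext U
  congr 1
  ext hsU
  congr 1
  ext hU
  exact hUeq U hU

end Statement8Aux

open MeasureTheory Complex
open scoped ENNReal NNReal Pointwise

section MainProof
set_option maxHeartbeats 1000000
set_option synthInstance.maxHeartbeats 400000

/-- If a finite Radon measure `ρ` on `Ĝ` has density `α` with respect
to `ν̃`, then the image measure `ρ^π = π_*ρ` has a density `α'` with respect to `ν`,
given `ν̃`-almost everywhere by `α'(π(x)) = ∫_{H⊥} α(x·y) dμ_{H⊥}(y)`. -/
theorem statement8
    {G : Type} [CommGroup G] [TopologicalSpace G] [IsTopologicalGroup G]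
    [LocallyCompactSpace G] [SecondCountableTopology G] [T2Space G]
    (H : Subgroup G) (hHclosed : IsClosed (H : Set G))
    [MeasurableSpace (PontryaginDual G)] [BorelSpace (PontryaginDual G)]
    (Hp : Subgroup (PontryaginDual G))
    (hHp : ∀ y : PontryaginDual G, y ∈ Hp ↔ ∀ h ∈ H, y h = 1)
    [MeasurableSpace ↥Hp] [BorelSpace ↥Hp]
    (μHp : Measure ↥Hp) [μHp.IsHaarMeasure]
    [MeasurableSpace (PontryaginDual G ⧸ Hp)] [BorelSpace (PontryaginDual G ⧸ Hp)]
    (ν : Measure (PontryaginDual G ⧸ Hp)) [ν.Regular]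
    (νt : Measure (PontryaginDual G)) [νt.Regular]
    (hνt : ∀ φ : PontryaginDual G → ℂ, Continuous φ → HasCompactSupport φ →
      ∫ x, φ x ∂νt =
        ∫ xq : PontryaginDual G ⧸ Hp, (∫ y : ↥Hp, φ (Quotient.out xq * ↑y) ∂μHp) ∂ν)
    (ρ : Measure (PontryaginDual G)) [IsFiniteMeasure ρ] [ρ.Regular]
    (α : PontryaginDual G → ℝ) (hαmeas : Measurable α) (hαpos : ∀ x, 0 ≤ α x)
    (hαint : Integrable α νt)
    (hρ : ρ = νt.withDensity (fun x => ENNReal.ofReal (α x))) :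
    ∃ α' : PontryaginDual G ⧸ Hp → ℝ,
      Measurable α' ∧ (∀ xq, 0 ≤ α' xq) ∧ Integrable α' ν ∧
      Measure.map (fun x : PontryaginDual G =>
        (QuotientGroup.mk x : PontryaginDual G ⧸ Hp)) ρ
        = ν.withDensity (fun xq => ENNReal.ofReal (α' xq)) ∧
      (∀ᵐ x ∂νt, α' (QuotientGroup.mk x : PontryaginDual G ⧸ Hp)
        = ∫ y : ↥Hp, α (x * ↑y) ∂μHp) := by
  classical
  -- ## Instances
  haveI : SecondCountableTopology (PontryaginDual G) :=
    (ContinuousMonoidHom.isInducing_toContinuousMap G Circle).secondCountableTopology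
  haveI hHpclosed : IsClosed (Hp : Set (PontryaginDual G)) := by
    have heq : (Hp : Set (PontryaginDual G)) =
        ⋂ h ∈ (H : Set G), {y : PontryaginDual G | y h = 1} := by
      ext y
      simp only [SetLike.mem_coe, hHp y, Set.mem_iInter, Set.mem_setOf_eq]
    rw [heq]
    refine isClosed_biInter fun h _ => ?_
    have h1 : Continuous fun ψ : C(G, Circle) => ψ h :=
      continuous_eval_const h
    have hc : Continuous fun y : PontryaginDual G => y h := by
      exact h1.comp (ContinuousMonoidHom.isInducing_toContinuousMap G Circle).continuous
    exact isClosed_eq hc continuous_const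
  haveI : LocallyCompactSpace ↥Hp := hHpclosed.locallyCompactSpace
  haveI : SecondCountableTopology ↥Hp :=
    TopologicalSpace.Subtype.secondCountableTopology (Hp : Set (PontryaginDual G))
  haveI : IsFiniteMeasureOnCompacts μHp := inferInstance
  haveI : IsLocallyFiniteMeasure μHp := inferInstance
  haveI : SigmaFinite μHp := by exact sigmaFinite_of_locallyFinite
  haveI : IsLocallyFiniteMeasure ν := inferInstance
  haveI : SigmaFinite ν := by exact sigmaFinite_of_locallyFinite
  -- ## the measurable section
  obtain ⟨s, hsmeas, hssec⟩ :
      ∃ s : (PontryaginDual G ⧸ Hp) → PontryaginDual G,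
        Measurable s ∧ ∀ q, (QuotientGroup.mk (s q) : PontryaginDual G ⧸ Hp) = q :=
    Statement8Aux.exists_measurable_section QuotientGroup.continuous_mk
      QuotientGroup.mk_surjective
  -- projection of products
  have hproj : ∀ (q : PontryaginDual G ⧸ Hp) (y : ↥Hp),
      (QuotientGroup.mk (s q * ↑y) : PontryaginDual G ⧸ Hp) = q := by
    intro q y
    rw [QuotientGroup.mk_mul_of_mem (s q) y.2]
    exact hssec q
  -- the comparison measure
  set g : (PontryaginDual G ⧸ Hp) × ↥Hp → PontryaginDual G :=
    fun p => s p.1 * ↑p.2 with hg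
  have hgmeas : Measurable g :=
    (hsmeas.comp measurable_fst).mul ((continuous_subtype_val.measurable.comp measurable_snd))
  set m : Measure (PontryaginDual G) := Measure.map g (ν.prod μHp) with hm
  -- lintegral formula for m
  have hmint : ∀ F : PontryaginDual G → ℝ≥0∞, Measurable F →
      ∫⁻ x, F x ∂m = ∫⁻ q, ∫⁻ y : ↥Hp, F (s q * ↑y) ∂μHp ∂ν := by
    intro F hF
    rw [hm, lintegral_map hF hgmeas]
    exact lintegral_prod (fun z => F (g z)) ((hF.comp hgmeas).aemeasurable)
  -- invariance of fiber integrals (lintegral version)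
  have hinv : ∀ u v : PontryaginDual G,
      (QuotientGroup.mk u : PontryaginDual G ⧸ Hp) = QuotientGroup.mk v →
      ∀ F : PontryaginDual G → ℝ≥0∞,
        ∫⁻ y : ↥Hp, F (u * ↑y) ∂μHp = ∫⁻ y : ↥Hp, F (v * ↑y) ∂μHp := by
    intro u v huv F
    have hz : u⁻¹ * v ∈ Hp := QuotientGroup.eq.mp huv
    have hvz : v = u * ((⟨u⁻¹ * v, hz⟩ : ↥Hp) : PontryaginDual G) := by
      simp [mul_inv_cancel_left]
    calc ∫⁻ y : ↥Hp, F (u * ↑y) ∂μHp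
        = ∫⁻ y : ↥Hp, F (u * ↑((⟨u⁻¹ * v, hz⟩ : ↥Hp) * y)) ∂μHp := by
          rw [lintegral_mul_left_eq_self (fun w : ↥Hp => F (u * ↑w)) (⟨u⁻¹ * v, hz⟩ : ↥Hp)]
      _ = ∫⁻ y : ↥Hp, F (v * ↑y) ∂μHp := by
          congr 1
          funext y
          congr 1
          rw [Subgroup.coe_mul]
          rw [show ((⟨u⁻¹ * v, hz⟩ : ↥Hp) : PontryaginDual G) = u⁻¹ * v from rfl]
          group
  -- invariance (Bochner version)
  have hinvR : ∀ u v : PontryaginDual G,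
      (QuotientGroup.mk u : PontryaginDual G ⧸ Hp) = QuotientGroup.mk v →
      ∀ φ : PontryaginDual G → ℝ,
        ∫ y : ↥Hp, φ (u * ↑y) ∂μHp = ∫ y : ↥Hp, φ (v * ↑y) ∂μHp := by
    intro u v huv φ
    have hz : u⁻¹ * v ∈ Hp := QuotientGroup.eq.mp huv
    have hvz : v = u * ((⟨u⁻¹ * v, hz⟩ : ↥Hp) : PontryaginDual G) := by
      simp [mul_inv_cancel_left]
    calc ∫ y : ↥Hp, φ (u * ↑y) ∂μHp
        = ∫ y : ↥Hp, φ (u * ↑((⟨u⁻¹ * v, hz⟩ : ↥Hp) * y)) ∂μHp := by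
          rw [integral_mul_left_eq_self (fun w : ↥Hp => φ (u * ↑w)) (⟨u⁻¹ * v, hz⟩ : ↥Hp)]
      _ = ∫ y : ↥Hp, φ (v * ↑y) ∂μHp := by
          congr 1
          funext y
          congr 1
          rw [Subgroup.coe_mul]
          rw [show ((⟨u⁻¹ * v, hz⟩ : ↥Hp) : PontryaginDual G) = u⁻¹ * v from rfl]
          group
  -- m is finite on compact sets
  haveI hmfc : IsFiniteMeasureOnCompacts m := by
    constructor
    intro K hK
    have hKm : MeasurableSet K := hK.isClosed.measurableSet
    have hKK : IsCompact (K⁻¹ * K) := hK.inv.mul hK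
    set C : ℝ≥0∞ := μHp (Subtype.val ⁻¹' (K⁻¹ * K)) with hC
    have hCfin : C < ∞ := by
      have hcomp : IsCompact (Subtype.val ⁻¹' (K⁻¹ * K) : Set ↥Hp) :=
        hHpclosed.isClosedEmbedding_subtypeVal.isCompact_preimage hKK
      exact hcomp.measure_lt_top
    have hbound : ∀ q : PontryaginDual G ⧸ Hp,
        μHp {y : ↥Hp | s q * ↑y ∈ K} ≤
          (QuotientGroup.mk '' K : Set (PontryaginDual G ⧸ Hp)).indicator (fun _ => C) q := by
      intro q
      rcases Set.eq_empty_or_nonempty {y : ↥Hp | s q * ↑y ∈ K} with hempty | ⟨y₀, hy₀⟩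
      · rw [hempty]
        simp
      · have hqK : q ∈ (QuotientGroup.mk '' K : Set (PontryaginDual G ⧸ Hp)) :=
          ⟨s q * ↑y₀, hy₀, hproj q y₀⟩
        rw [Set.indicator_of_mem hqK]
        have hsub : {y : ↥Hp | s q * ↑y ∈ K} ⊆
            (fun z : ↥Hp => y₀⁻¹ * z) ⁻¹' (Subtype.val ⁻¹' (K⁻¹ * K)) := by
          intro y hy
          simp only [Set.mem_preimage, Subgroup.coe_mul, InvMemClass.coe_inv]
          refine ⟨(s q * ↑y₀)⁻¹, Set.inv_mem_inv.2 hy₀, s q * ↑y, hy, ?_⟩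
          group
        calc μHp {y : ↥Hp | s q * ↑y ∈ K}
            ≤ μHp ((fun z : ↥Hp => y₀⁻¹ * z) ⁻¹' (Subtype.val ⁻¹' (K⁻¹ * K))) :=
              measure_mono hsub
          _ = C := by rw [measure_preimage_mul]
    have hQKm : MeasurableSet (QuotientGroup.mk '' K : Set (PontryaginDual G ⧸ Hp)) :=
      ((hK.image QuotientGroup.continuous_mk).isClosed).measurableSet
    calc m K = (ν.prod μHp) (g ⁻¹' K) := Measure.map_apply hgmeas hKm
      _ = ∫⁻ q, μHp {y : ↥Hp | s q * ↑y ∈ K} ∂ν := by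
          rw [Measure.prod_apply (hgmeas hKm)]
          rfl
      _ ≤ ∫⁻ q, (QuotientGroup.mk '' K :
            Set (PontryaginDual G ⧸ Hp)).indicator (fun _ => C) q ∂ν :=
          lintegral_mono hbound
      _ = C * ν (QuotientGroup.mk '' K) := by
          rw [lintegral_indicator hQKm, setLIntegral_const]
      _ < ∞ := ENNReal.mul_lt_top hCfin.ne.lt_top
          ((hK.image QuotientGroup.continuous_mk).measure_lt_top)
  haveI : m.Regular := by infer_instance
  -- m agrees with νt on compactly supported continuous functions
  have hνtm : νt = m := by
    refine Statement8Aux.measure_eq_of_integral_eq νt m ?_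
    intro φ hφ hφc
    -- step 1: hνt for the complexification
    have hφcC : Continuous fun x => (φ x : ℂ) := Complex.continuous_ofReal.comp hφ
    have hφccC : HasCompactSupport fun x => (φ x : ℂ) := by
      have : (fun x => (φ x : ℂ)) = Complex.ofReal ∘ φ := rfl
      rw [this]
      exact hφc.comp_left (by simp)
    have h1 := hνt _ hφcC hφccC
    have e1 : ∫ x, ((φ x : ℂ)) ∂νt = ((∫ x, φ x ∂νt : ℝ) : ℂ) := integral_ofReal
    have h2 : ∀ q : PontryaginDual G ⧸ Hp,
        ∫ y : ↥Hp, ((φ (Quotient.out q * ↑y) : ℂ)) ∂μHp =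
          ((∫ y : ↥Hp, φ (Quotient.out q * ↑y) ∂μHp : ℝ) : ℂ) := fun q => integral_ofReal
    simp only [h2] at h1
    have e2 : ∫ q : PontryaginDual G ⧸ Hp,
        ((∫ y : ↥Hp, φ (Quotient.out q * ↑y) ∂μHp : ℝ) : ℂ) ∂ν =
        ((∫ q : PontryaginDual G ⧸ Hp,
          (∫ y : ↥Hp, φ (Quotient.out q * ↑y) ∂μHp) ∂ν : ℝ) : ℂ) := integral_ofReal
    rw [e1, e2] at h1
    have h1' : ∫ x, φ x ∂νt =
        ∫ q, (∫ y : ↥Hp, φ (Quotient.out q * ↑y) ∂μHp) ∂ν := by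
      exact_mod_cast h1
    -- step 2: compute the m integral
    have hφm : Integrable φ m := hφ.integrable_of_hasCompactSupport hφc
    have hint : Integrable (φ ∘ g) (ν.prod μHp) :=
      (integrable_map_measure hφ.aestronglyMeasurable hgmeas.aemeasurable).1 hφm
    have h3 : ∫ x, φ x ∂m = ∫ q, (∫ y : ↥Hp, φ (s q * ↑y) ∂μHp) ∂ν := by
      rw [hm, integral_map hgmeas.aemeasurable hφ.aestronglyMeasurable]
      exact integral_prod _ hint
    rw [h1', h3]
    refine integral_congr_ae (Filter.Eventually.of_forall fun q => ?_)
    exact hinvR _ _ (by rw [QuotientGroup.out_eq' q, hssec q]) φ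
  -- ## the density
  set f : PontryaginDual G → ℝ≥0∞ := fun x => ENNReal.ofReal (α x) with hf
  have hfmeas : Measurable f := hαmeas.ennreal_ofReal
  set L : PontryaginDual G → ℝ≥0∞ :=
    fun x => ∫⁻ y : ↥Hp, f (x * ↑y) ∂μHp with hL
  have hLmeas : Measurable L := by
    apply Measurable.lintegral_prod_right'
      (f := fun p : PontryaginDual G × ↥Hp => f (p.1 * ↑p.2))
    exact hfmeas.comp (measurable_fst.mul ((continuous_subtype_val.measurable.comp measurable_snd)))
  have hLs : Measurable fun q => L (s q) := hLmeas.comp hsmeas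
  have hLsπ : ∀ x : PontryaginDual G, L (s (QuotientGroup.mk x)) = L x := by
    intro x
    exact hinv _ _ (by rw [hssec]) f
  -- total mass of f against νt is finite
  have hρuniv : ∫⁻ x, f x ∂νt = ρ Set.univ := by
    rw [hρ, withDensity_apply _ MeasurableSet.univ, Measure.restrict_univ]
  have hffin : ∫⁻ x, f x ∂νt < ∞ := by
    rw [hρuniv]; exact measure_lt_top ρ _
  -- integral of L∘s against ν equals total mass
  have hLsint : ∫⁻ q, L (s q) ∂ν = ∫⁻ x, f x ∂νt := by
    rw [hνtm, hmint f hfmeas]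
  have hLsfin : ∫⁻ q, L (s q) ∂ν ≠ ∞ := by
    rw [hLsint]; exact hffin.ne
  -- the density function
  refine ⟨fun q => (L (s q)).toReal, hLs.ennreal_toReal, fun q => ENNReal.toReal_nonneg,
    ?_, ?_, ?_⟩
  · exact integrable_toReal_of_lintegral_ne_top hLs.aemeasurable hLsfin
  · -- the pushforward identity
    have hae : ∀ᵐ q ∂ν, L (s q) < ∞ := ae_lt_top hLs hLsfin
    have hwd : ν.withDensity (fun q => ENNReal.ofReal ((L (s q)).toReal)) =
        ν.withDensity (fun q => L (s q)) := by
      refine withDensity_congr_ae ?_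
      filter_upwards [hae] with q hq
      exact ENNReal.ofReal_toReal hq.ne
    rw [hwd]
    -- now compute the map
    have hπmeas : Measurable (fun x : PontryaginDual G =>
        (QuotientGroup.mk x : PontryaginDual G ⧸ Hp)) :=
      QuotientGroup.continuous_mk.measurable
    refine Measure.ext fun S hS => ?_
    rw [Measure.map_apply hπmeas hS, hρ, hνtm,
      withDensity_apply _ (hπmeas hS), withDensity_apply _ hS]
    have hind : ∫⁻ x in QuotientGroup.mk ⁻¹' S, f x ∂m =
        ∫⁻ x, ((QuotientGroup.mk ⁻¹' S : Set (PontryaginDual G)).indicator f) x ∂m := by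
      rw [lintegral_indicator (hπmeas hS)]
    rw [hind, hmint _ (hfmeas.indicator (hπmeas hS))]
    have hinner : ∀ q, ∫⁻ y : ↥Hp,
        ((QuotientGroup.mk ⁻¹' S : Set (PontryaginDual G)).indicator f) (s q * ↑y) ∂μHp =
        S.indicator (fun q => L (s q)) q := by
      intro q
      by_cases hq : q ∈ S
      · rw [Set.indicator_of_mem hq]
        have : ∀ y : ↥Hp, ((QuotientGroup.mk ⁻¹' S :
            Set (PontryaginDual G)).indicator f) (s q * ↑y) = f (s q * ↑y) := by
          intro y
          refine Set.indicator_of_mem ?_ f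
          simp only [Set.mem_preimage, hproj q y]
          exact hq
        simp only [this]; rfl
      · rw [Set.indicator_of_notMem hq]
        have : ∀ y : ↥Hp, ((QuotientGroup.mk ⁻¹' S :
            Set (PontryaginDual G)).indicator f) (s q * ↑y) = 0 := by
          intro y
          refine Set.indicator_of_notMem ?_ f
          simp only [Set.mem_preimage, hproj q y]
          exact hq
        simp only [this]
        exact lintegral_zero
    simp only [hinner]
    rw [lintegral_indicator hS]
  · -- the a.e. identity
    refine Filter.Eventually.of_forall fun x => ?_
    show (L (s (QuotientGroup.mk x))).toReal = ∫ y : ↥Hp, α (x * ↑y) ∂μHp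
    rw [hLsπ x]
    have hmble : AEStronglyMeasurable (fun y : ↥Hp => α (x * ↑y)) μHp := by
      refine (hαmeas.comp ?_).aestronglyMeasurable
      exact (measurable_const.mul continuous_subtype_val.measurable)
    rw [integral_eq_lintegral_of_nonneg_ae
      (Filter.Eventually.of_forall fun y => hαpos _) hmble]
end MainProof
end

section
/- Let F and E be separable complex Hilbert spaces, ν a Radon measure on Ĝ/H⊥ finite on compact sets, α : Ĝ → [0,∞) a Borel function, and ρ = α·ν̃ the measure on Ĝ with density α with respect to ν̃. Let x ↦ W₁(x) ∈ L(F;E) be a weakly measurable map (i.e. x ↦ ⟨W₁(x)u, v⟩ is Borel for all u ∈ F, v ∈ E) such that W₁(x) is an isometry for ρ-almost every x. Then the map W sending φ ∈ L²(Ĝ, ρ; F) to the function x ↦ √(α(x))·W₁(x)(φ(x)) is a well-defined linear isometry from L²(Ĝ, ρ; F) into L²(Ĝ, ν̃; E), and W intertwines the diagonal actions of G: for every g ∈ G and φ ∈ L²(Ĝ, ρ; F), W(x ↦ x(g)·φ(x)) = (x ↦ x(g)·(Wφ)(x)) in L²(Ĝ, ν̃; E). -/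
open MeasureTheory Complex
open scoped ENNReal NNReal InnerProductSpace

open Filter Topology

section Aux

variable {X : Type} [MeasurableSpace X]
variable {E : Type} [NormedAddCommGroup E] [InnerProductSpace ℂ E]

/-- Pettis measurability theorem for separable Hilbert spaces. -/
theorem st10_pettis [SecondCountableTopology E]
    (g : X → E) (hg : ∀ v : E, Measurable fun x => (⟪g x, v⟫_ℂ : ℂ)) :
    StronglyMeasurable g := by
  borelize E
  haveI : Nonempty E := ⟨0⟩
  set u : ℕ → E := TopologicalSpace.denseSeq E with hu
  have hdense : DenseRange u := TopologicalSpace.denseRange_denseSeq E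
  set v : ℕ → E := fun n => (max 1 ‖u n‖)⁻¹ • u n with hv
  have hmaxpos : ∀ y : E, (0:ℝ) < max 1 ‖y‖ := fun y =>
    lt_of_lt_of_le one_pos (le_max_left _ _)
  have hvnorm : ∀ n, ‖v n‖ ≤ 1 := by
    intro n
    rw [hv]
    simp only [norm_smul, Real.norm_eq_abs, abs_of_pos (inv_pos.2 (hmaxpos (u n)))]
    rw [inv_mul_le_iff₀ (hmaxpos (u n)), mul_one]
    exact le_max_right _ _
  have hbound : ∀ (z : E) (n : ℕ), ‖(⟪z, v n⟫_ℂ : ℂ)‖ ≤ ‖z‖ := by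
    intro z n
    calc ‖(⟪z, v n⟫_ℂ : ℂ)‖ ≤ ‖z‖ * ‖v n‖ := norm_inner_le_norm _ _
    _ ≤ ‖z‖ * 1 := mul_le_mul_of_nonneg_left (hvnorm n) (norm_nonneg z)
    _ = ‖z‖ := mul_one _
  have key : ∀ z : E, ‖z‖ = ⨆ n, ‖(⟪z, v n⟫_ℂ : ℂ)‖ := by
    intro z
    have hbdd : BddAbove (Set.range fun n => ‖(⟪z, v n⟫_ℂ : ℂ)‖) :=
      ⟨‖z‖, by rintro _ ⟨n, rfl⟩; exact hbound z n⟩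
    refine le_antisymm ?_ (ciSup_le fun n => hbound z n)
    rcases eq_or_ne z 0 with rfl | hz
    · simp [ciSup_const]
    · obtain ⟨f, hfmem, hflim⟩ :=
        mem_closure_iff_seq_limit.1 (hdense ((‖z‖⁻¹ : ℝ) • z))
      choose m hm using hfmem
      have hcont : Continuous fun y : E => (max 1 ‖y‖)⁻¹ • y :=
        ((continuous_const.max continuous_norm).inv₀ fun y =>
          ne_of_gt (hmaxpos y)).smul continuous_id
      have hlim2 : Tendsto (fun k => v (m k)) atTop (𝓝 ((‖z‖⁻¹ : ℝ) • z)) := by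
        have h1 : Tendsto (fun k => (max 1 ‖f k‖)⁻¹ • f k) atTop
            (𝓝 ((max 1 ‖(‖z‖⁻¹ : ℝ) • z‖)⁻¹ • ((‖z‖⁻¹ : ℝ) • z))) :=
          (hcont.tendsto _).comp hflim
        have h2 : max 1 ‖(‖z‖⁻¹ : ℝ) • z‖ = 1 := by
          rw [norm_smul, Real.norm_eq_abs, _root_.abs_of_nonneg (inv_nonneg.2 (norm_nonneg z)),
            inv_mul_cancel₀ (norm_ne_zero_iff.2 hz), max_self]
        rw [h2, inv_one, one_smul] at h1
        have h3 : (fun k => v (m k)) = fun k => (max 1 ‖f k‖)⁻¹ • f k := by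
          funext k; rw [hv]; simp only [hm k]
        rw [h3]; exact h1
      have hlim3 : Tendsto (fun k => ‖(⟪z, v (m k)⟫_ℂ : ℂ)‖) atTop (𝓝 ‖z‖) := by
        have hc : Continuous fun y : E => ‖(⟪z, y⟫_ℂ : ℂ)‖ :=
          (continuous_const.inner continuous_id).norm
        have h := (hc.tendsto _).comp hlim2
        have hval : ‖(⟪z, (‖z‖⁻¹ : ℝ) • z⟫_ℂ : ℂ)‖ = ‖z‖ := by
          rw [RCLike.real_smul_eq_coe_smul (K := ℂ), inner_smul_right,
            inner_self_eq_norm_sq_to_K, norm_mul, norm_pow, RCLike.norm_ofReal,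
            RCLike.norm_ofReal, abs_norm, _root_.abs_of_nonneg (inv_nonneg.2 (norm_nonneg z))]
          rw [pow_two, ← mul_assoc, inv_mul_cancel₀ (norm_ne_zero_iff.2 hz), one_mul]
        rw [hval] at h
        exact h
      exact le_of_tendsto hlim3 (Eventually.of_forall fun k => le_ciSup hbdd (m k))
  have hnd : ∀ w : E, Measurable fun x => ‖g x - w‖ := by
    intro w
    have h1 : (fun x => ‖g x - w‖) = fun x => ⨆ n, ‖(⟪g x, v n⟫_ℂ : ℂ) - ⟪w, v n⟫_ℂ‖ := by
      funext x
      rw [key (g x - w)]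
      congr 1; funext n; rw [inner_sub_left]
    rw [h1]
    exact Measurable.iSup fun n => ((hg (v n)).sub measurable_const).norm
  refine (measurable_of_isOpen fun s hs => ?_).stronglyMeasurable
  have hcov : g ⁻¹' s = ⋃ (n : ℕ) (q : ℚ),
      ⋃ (_ : 0 < (q:ℝ) ∧ Metric.ball (u n) (q:ℝ) ⊆ s), {x | ‖g x - u n‖ < (q:ℝ)} := by
    ext x
    simp only [Set.mem_preimage, Set.mem_iUnion, Set.mem_setOf_eq]
    constructor
    · intro hx
      obtain ⟨ε, hε, hball⟩ := Metric.isOpen_iff.1 hs (g x) hx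
      obtain ⟨n, hn⟩ := hdense.exists_dist_lt (g x) (by positivity : (0:ℝ) < ε/4)
      obtain ⟨q, hq1, hq2⟩ := exists_rat_btwn (by linarith : ε/4 < ε/2)
      have hq0 : (0:ℝ) < q := lt_trans (by positivity) hq1
      refine ⟨n, q, ⟨hq0, fun z hz => hball ?_⟩, ?_⟩
      · rw [Metric.mem_ball] at hz ⊢
        have h4 : dist (u n) (g x) < ε/4 := by rw [dist_comm]; exact hn
        calc dist z (g x) ≤ dist z (u n) + dist (u n) (g x) := dist_triangle _ _ _
        _ < q + ε/4 := add_lt_add hz h4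
        _ < ε := by linarith
      · rw [← dist_eq_norm]; linarith [hn]
    · rintro ⟨n, q, ⟨hq, hsub⟩, hx⟩
      exact hsub (by rw [Metric.mem_ball, dist_eq_norm]; exact hx)
  rw [hcov]
  exact MeasurableSet.iUnion fun n => MeasurableSet.iUnion fun q =>
    MeasurableSet.iUnion fun _ => measurableSet_lt (hnd (u n)) measurable_const

theorem st10_apply_meas {F : Type} [NormedAddCommGroup F] [InnerProductSpace ℂ F]
    [SecondCountableTopology E]
    (W₁ : X → (F →L[ℂ] E))
    (hW : ∀ (u : F) (v : E), Measurable fun x => (⟪W₁ x u, v⟫_ℂ : ℂ))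
    {f : X → F} (hf : StronglyMeasurable f) :
    StronglyMeasurable fun x => W₁ x (f x) := by
  classical
  have hWu : ∀ u : F, StronglyMeasurable fun x => W₁ x u := fun u => st10_pettis _ (hW u)
  have hsimple : ∀ s : SimpleFunc X F, StronglyMeasurable fun x => W₁ x (s x) := by
    intro s
    refine SimpleFunc.induction ?_ ?_ s
    · intro c t ht
      have h1 : (fun x => W₁ x ((SimpleFunc.piecewise t ht (SimpleFunc.const X c)
          (SimpleFunc.const X 0)) x)) = fun x => if x ∈ t then W₁ x c else 0 := by
        funext x
        rw [SimpleFunc.piecewise_apply]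
        split <;> simp
      rw [h1]
      exact StronglyMeasurable.ite ht (hWu c) stronglyMeasurable_const
    · intro p q _ hp hq
      have h1 : (fun x => W₁ x ((p + q) x)) =
          fun x => W₁ x (p x) + W₁ x (q x) := by
        funext x; rw [SimpleFunc.coe_add, Pi.add_apply, map_add]
      rw [h1]
      exact hp.add hq
  refine stronglyMeasurable_of_tendsto atTop (fun n => hsimple (hf.approx n)) ?_
  exact tendsto_pi_nhds.2 fun x => ((W₁ x).continuous.tendsto _).comp (hf.tendsto_approx x)

theorem st10_eLpNorm {F : Type} [NormedAddCommGroup F] [InnerProductSpace ℂ F]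
    (νt : Measure X) (α : X → ℝ) (hαmeas : Measurable α) (hαpos : ∀ x, 0 ≤ α x)
    (W₁ : X → (F →L[ℂ] E))
    (hiso : ∀ᵐ x ∂(νt.withDensity fun x => ENNReal.ofReal (α x)), Isometry (W₁ x))
    (f : X → F) :
    eLpNorm (fun x => Real.sqrt (α x) • W₁ x (f x)) 2 νt
      = eLpNorm f 2 (νt.withDensity fun x => ENNReal.ofReal (α x)) := by
  have hiso' : ∀ᵐ x ∂νt, ENNReal.ofReal (α x) ≠ 0 → Isometry (W₁ x) :=
    (ae_withDensity_iff hαmeas.ennreal_ofReal).1 hiso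
  rw [eLpNorm_eq_lintegral_rpow_enorm_toReal two_ne_zero ENNReal.ofNat_ne_top,
    eLpNorm_eq_lintegral_rpow_enorm_toReal two_ne_zero ENNReal.ofNat_ne_top]
  congr 1
  rw [lintegral_withDensity_eq_lintegral_mul_non_measurable _ hαmeas.ennreal_ofReal
    (Eventually.of_forall fun x => ENNReal.ofReal_lt_top)]
  refine lintegral_congr_ae ?_
  filter_upwards [hiso'] with x hx
  simp only [ENNReal.toReal_ofNat, Pi.mul_apply]
  by_cases h0 : ENNReal.ofReal (α x) = 0
  · have hα0 : α x = 0 := le_antisymm (ENNReal.ofReal_eq_zero.1 h0) (hαpos x)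
    rw [hα0, Real.sqrt_zero, zero_smul, enorm_zero,
      ENNReal.zero_rpow_of_pos (by norm_num), ENNReal.ofReal_zero, zero_mul]
  · have hnorm : ‖W₁ x (f x)‖ₑ = ‖f x‖ₑ := by
      have h := (hx h0).norm_map_of_map_zero (map_zero _) (f x)
      rw [enorm_eq_nnnorm, enorm_eq_nnnorm]
      exact congrArg _ (NNReal.coe_injective (by simpa using h))
    rw [enorm_smul, ENNReal.mul_rpow_of_nonneg _ _ (by norm_num : (0:ℝ) ≤ 2),
      hnorm]
    congr 1
    rw [Real.enorm_eq_ofReal (Real.sqrt_nonneg _)]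
    rw [ENNReal.ofReal_rpow_of_nonneg (Real.sqrt_nonneg _) (by norm_num : (0:ℝ) ≤ 2)]
    congr 1
    rw [show ((2:ℝ)) = ((2:ℕ):ℝ) by norm_num, Real.rpow_natCast]
    exact Real.sq_sqrt (hαpos x)

end Aux


/-- Given a weakly measurable family `x ↦ W₁(x)` of operators
`F → E` which are isometries `ρ`-a.e., where `ρ = α·ν̃`, the map
`(Wφ)(x) = √(α(x))·W₁(x)(φ(x))` is a well-defined linear isometry
`L²(Ĝ,ρ;F) → L²(Ĝ,ν̃;E)` intertwining the diagonal actions of `G`. -/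
theorem statement10
    {G : Type} [CommGroup G] [TopologicalSpace G] [IsTopologicalGroup G]
    [LocallyCompactSpace G] [SecondCountableTopology G] [T2Space G]
    (H : Subgroup G) (hHclosed : IsClosed (H : Set G))
    [MeasurableSpace (PontryaginDual G)] [BorelSpace (PontryaginDual G)]
    (Hp : Subgroup (PontryaginDual G))
    (hHp : ∀ y : PontryaginDual G, y ∈ Hp ↔ ∀ h ∈ H, y h = 1)
    [MeasurableSpace ↥Hp] [BorelSpace ↥Hp]
    (μHp : Measure ↥Hp) [μHp.IsHaarMeasure]
    [MeasurableSpace (PontryaginDual G ⧸ Hp)] [BorelSpace (PontryaginDual G ⧸ Hp)]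
    (ν : Measure (PontryaginDual G ⧸ Hp)) [ν.Regular]
    (νt : Measure (PontryaginDual G)) [νt.Regular]
    (hνt : ∀ φ : PontryaginDual G → ℂ, Continuous φ → HasCompactSupport φ →
      ∫ x, φ x ∂νt =
        ∫ xq : PontryaginDual G ⧸ Hp, (∫ y : ↥Hp, φ (Quotient.out xq * ↑y) ∂μHp) ∂ν)
    {F : Type} [NormedAddCommGroup F] [InnerProductSpace ℂ F] [CompleteSpace F]
    [SecondCountableTopology F]
    {E : Type} [NormedAddCommGroup E] [InnerProductSpace ℂ E] [CompleteSpace E]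
    [SecondCountableTopology E]
    (α : PontryaginDual G → ℝ) (hαmeas : Measurable α) (hαpos : ∀ x, 0 ≤ α x)
    (ρ : Measure (PontryaginDual G))
    (hρ : ρ = νt.withDensity (fun x => ENNReal.ofReal (α x)))
    (W₁ : PontryaginDual G → (F →L[ℂ] E))
    (hW₁meas : ∀ (u : F) (v : E),
      Measurable (fun x : PontryaginDual G => (⟪W₁ x u, v⟫_ℂ : ℂ)))
    (hW₁iso : ∀ᵐ x ∂ρ, Isometry (W₁ x)) :
    ∃ W : Lp F 2 ρ →ₗᵢ[ℂ] Lp E 2 νt,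
      (∀ φ : Lp F 2 ρ,
        ⇑(W φ) =ᵐ[νt] fun x => Real.sqrt (α x) • W₁ x (φ x)) ∧
      (∀ (g : G) (φ ψ : Lp F 2 ρ),
        (⇑ψ =ᵐ[ρ] fun x : PontryaginDual G => ((x g : ℂ)) • φ x) →
        ⇑(W ψ) =ᵐ[νt] fun x : PontryaginDual G => ((x g : ℂ)) • (W φ) x) := by
  subst hρ
  classical
  have htrans : ∀ {f₁ f₂ : PontryaginDual G → F},
      f₁ =ᵐ[νt.withDensity fun x => ENNReal.ofReal (α x)] f₂ →
      (fun x => Real.sqrt (α x) • W₁ x (f₁ x)) =ᵐ[νt]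
        fun x => Real.sqrt (α x) • W₁ x (f₂ x) := by
    intro f₁ f₂ h
    rw [Filter.EventuallyEq, ae_withDensity_iff hαmeas.ennreal_ofReal] at h
    filter_upwards [h] with x hx
    by_cases h0 : ENNReal.ofReal (α x) = 0
    · have hα0 : α x = 0 := le_antisymm (ENNReal.ofReal_eq_zero.1 h0) (hαpos x)
      simp [hα0]
    · rw [hx h0]
  have hmem : ∀ φ : Lp F 2 (νt.withDensity fun x => ENNReal.ofReal (α x)),
      MemLp (fun x => Real.sqrt (α x) • W₁ x (φ x)) 2 νt := by
    intro φ
    refine ⟨(((Real.continuous_sqrt.measurable.comp hαmeas).stronglyMeasurable).smul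
      (st10_apply_meas W₁ hW₁meas (Lp.stronglyMeasurable φ))).aestronglyMeasurable, ?_⟩
    rw [st10_eLpNorm νt α hαmeas hαpos W₁ hW₁iso]
    exact Lp.eLpNorm_lt_top φ
  let Wlin : Lp F 2 (νt.withDensity fun x => ENNReal.ofReal (α x)) →ₗ[ℂ] Lp E 2 νt :=
    { toFun := fun φ => (hmem φ).toLp _
      map_add' := by
        intro φ ψ
        refine (MemLp.toLp_congr _ ((hmem φ).add (hmem ψ)) ?_).trans
          (MemLp.toLp_add _ _)
        refine (htrans (Lp.coeFn_add φ ψ)).trans (Filter.Eventually.of_forall fun x => ?_)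
        simp only [Pi.add_apply, map_add, smul_add]
      map_smul' := by
        intro c φ
        simp only [RingHom.id_apply]
        refine (MemLp.toLp_congr _ ((hmem φ).const_smul c) ?_).trans
          (MemLp.toLp_const_smul c _)
        refine (htrans (Lp.coeFn_smul c φ)).trans (Filter.Eventually.of_forall fun x => ?_)
        simp only [Pi.smul_apply, _root_.map_smul]
        exact smul_comm _ _ _ }
  have hWlin : ∀ φ, Wlin φ = (hmem φ).toLp _ := fun _ => rfl
  have hnorm : ∀ φ, ‖Wlin φ‖ = ‖φ‖ := by
    intro φ
    rw [hWlin, Lp.norm_toLp _ (hmem φ), st10_eLpNorm νt α hαmeas hαpos W₁ hW₁iso,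
      ← Lp.norm_def]
  refine ⟨⟨Wlin, hnorm⟩, fun φ => MemLp.coeFn_toLp (hmem φ), ?_⟩
  · intro g φ ψ hψ
    have h1 : ⇑((⟨Wlin, hnorm⟩ : _ →ₗᵢ[ℂ] _) ψ) =ᵐ[νt]
        fun x => Real.sqrt (α x) • W₁ x (ψ x) := MemLp.coeFn_toLp (hmem ψ)
    have h3 : ⇑((⟨Wlin, hnorm⟩ : _ →ₗᵢ[ℂ] _) φ) =ᵐ[νt]
        fun x => Real.sqrt (α x) • W₁ x (φ x) := MemLp.coeFn_toLp (hmem φ)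
    have h2 := htrans hψ
    filter_upwards [h1, h2, h3] with x hx1 hx2 hx3
    rw [hx1, hx2, hx3, _root_.map_smul]
    exact smul_comm _ _ _
end
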